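/- arXiv:1910.07362 — 8 statements merged into one kernel-verified Lean document; each statement's English description precedes it below -/
import Mathlib

section
/- Let X, Y, Z be Banach spaces, U ⊆ X an open set, and T : Y → X a compact bounded linear operator. If f : U → Z is locally Lipschitz and Gâteaux differentiable at a point T y ∈ U (where y ∈ Y), then f ∘ T is Fréchet differentiable at y, with Fréchet derivative equal to the composition of the Gâteaux derivative of f at T y with T. -/
open Filter Metric Topology

section Defs
variable {X Z : Type*} [NormedAddCommGroup X] [NormedSpace ℝ X]
  [NormedAddCommGroup Z] [NormedSpace ℝ Z]

/-- `A` is the Gâteaux derivative of `f` at `x`: for every direction `h`,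
`(f (x + t h) - f x)/t → A h` as `t → 0`, `t ≠ 0`. -/
def HasGateauxDerivAt (f : X → Z) (A : X →L[ℝ] Z) (x : X) : Prop :=
  ∀ h : X, Tendsto (fun t : ℝ => t⁻¹ • (f (x + t • h) - f x)) (𝓝[≠] (0 : ℝ)) (𝓝 (A h))

/-- `f` is Gâteaux differentiable at `x`. -/
def GateauxDifferentiableAt (f : X → Z) (x : X) : Prop :=
  ∃ A : X →L[ℝ] Z, HasGateauxDerivAt f A x

/-- `f` is locally Lipschitz on `U`: every point of `U` has a neighborhood on
which `f` is Lipschitz (relative to `U`). -/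
def LocallyLipschitzOnSet (f : X → Z) (U : Set X) : Prop :=
  ∀ u ∈ U, ∃ (K : NNReal) (r : ℝ), 0 < r ∧ LipschitzOnWith K f (U ∩ ball u r)
end Defs

/-! A function that is Lipschitz near `x` and Gâteaux differentiable at `x` is differentiable
uniformly along any totally bounded set of directions: the difference quotients converge on a
finite `δ`-net of directions, and the Lipschitz bound carries the estimate over to every direction
within `δ` of the net. A compact `T` maps the unit ball of `Y` into such a set, so the difference
quotients of `f ∘ T` converge uniformly over the unit ball, which is Fréchet differentiability. -/

open Bornology NNReal

section Slopes

variable {X Z : Type*} [NormedAddCommGroup X] [NormedSpace ℝ X]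
  [NormedAddCommGroup Z] [NormedSpace ℝ Z]

theorem Bornology.IsBounded.eventually_add_smul_mem {S s : Set X} {x : X} (hS : IsBounded S)
    (hs : s ∈ 𝓝 x) : ∀ᶠ t : ℝ in 𝓝 0, ∀ v ∈ S, x + t • v ∈ s := by
  have hV : (x + ·) ⁻¹' s ∈ 𝓝 (0 : X) :=
    (continuous_const_add x).continuousAt.preimage_mem_nhds (by simpa using hs)
  exact (((NormedSpace.isVonNBounded_iff ℝ).2 hS) hV).eventually_nhds_zero (mem_of_mem_nhds hV)

theorem LipschitzOnWith.dist_slope_le {f : X → Z} {K : ℝ≥0} {s : Set X}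
    (hf : LipschitzOnWith K f s) {x v w : X} {t : ℝ} (ht : t ≠ 0)
    (hv : x + t • v ∈ s) (hw : x + t • w ∈ s) :
    dist (t⁻¹ • (f (x + t • v) - f x)) (t⁻¹ • (f (x + t • w) - f x)) ≤ K * dist v w := by
  rw [dist_smul₀, dist_sub_right, norm_inv]
  calc ‖t‖⁻¹ * dist (f (x + t • v)) (f (x + t • w))
      ≤ ‖t‖⁻¹ * (K * dist (x + t • v) (x + t • w)) := by gcongr; exact hf.dist_le_mul _ hv _ hw
    _ = K * dist v w := by
      rw [dist_add_left, dist_smul₀]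
      field_simp [norm_ne_zero_iff.2 ht]

theorem HasGateauxDerivAt.tendstoUniformlyOn_slope_of_lipschitzOnWith {f : X → Z} {A : X →L[ℝ] Z}
    {x : X} (hA : HasGateauxDerivAt f A x) {K : ℝ≥0} {s : Set X} (hs : s ∈ 𝓝 x)
    (hf : LipschitzOnWith K f s) {S : Set X} (hS : TotallyBounded S) :
    TendstoUniformlyOn (fun (t : ℝ) v => t⁻¹ • (f (x + t • v) - f x)) A (𝓝[≠] 0) S := by
  rw [Metric.tendstoUniformlyOn_iff]
  intro ε hε
  set δ := ε / (‖A‖ + 1 + K)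
  have hδ : 0 < δ := by positivity
  obtain ⟨N, hNS, hNfin, hcover⟩ := finite_approx_of_totallyBounded hS δ hδ
  have hnet : ∀ᶠ t in 𝓝[≠] (0 : ℝ), ∀ n ∈ N, dist (A n) (t⁻¹ • (f (x + t • n) - f x)) < δ :=
    (eventually_all_finite hNfin).2 fun n _ => by
      simpa only [dist_comm] using Metric.tendsto_nhds.1 (hA n) δ hδ
  have hmem : ∀ᶠ t in 𝓝[≠] (0 : ℝ), ∀ v ∈ S, x + t • v ∈ s :=
    nhdsWithin_le_nhds (hS.isBounded.eventually_add_smul_mem hs)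
  filter_upwards [hnet, hmem, self_mem_nhdsWithin] with t hnet hmem ht v hv
  obtain ⟨n, hn, hvn⟩ := Set.mem_iUnion₂.1 (hcover hv)
  rw [mem_ball] at hvn
  calc dist (A v) (t⁻¹ • (f (x + t • v) - f x))
      ≤ dist (A v) (A n) + dist (A n) (t⁻¹ • (f (x + t • n) - f x)) +
          dist (t⁻¹ • (f (x + t • n) - f x)) (t⁻¹ • (f (x + t • v) - f x)) :=
        dist_triangle4 _ _ _ _
    _ < ‖A‖ * δ + δ + K * δ := by
      have hAvn : dist (A v) (A n) ≤ ‖A‖ * δ :=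
        (A.lipschitz.dist_le_mul v n).trans (by rw [coe_nnnorm]; gcongr)
      have hfnv : dist (t⁻¹ • (f (x + t • n) - f x)) (t⁻¹ • (f (x + t • v) - f x)) ≤ K * δ :=
        (hf.dist_slope_le ht (hmem n (hNS hn)) (hmem v hv)).trans (by rw [dist_comm]; gcongr)
      linarith [hnet n hn]
    _ = ε := by simp only [δ]; field_simp

theorem hasFDerivAt_of_tendstoUniformlyOn_slope {g : X → Z} {L : X →L[ℝ] Z} {y : X}
    (h : TendstoUniformlyOn (fun (t : ℝ) v => t⁻¹ • (g (y + t • v) - g y)) L (𝓝[≠] 0)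
      (closedBall 0 1)) :
    HasFDerivAt g L y := by
  rw [hasFDerivAt_iff_isLittleO_nhds_zero, Asymptotics.isLittleO_iff]
  intro c hc
  have hsmall : ∀ᶠ k in 𝓝[≠] (0 : X), ∀ v ∈ closedBall (0 : X) 1,
      dist (L v) (‖k‖⁻¹ • (g (y + ‖k‖ • v) - g y)) < c :=
    (tendsto_norm_nhdsNE_zero.mono_right (nhdsGT_le_nhdsNE 0)).eventually
      (Metric.tendstoUniformlyOn_iff.1 h c hc)
  filter_upwards [eventually_nhdsWithin_iff.1 hsmall] with k hk
  rcases eq_or_ne k 0 with rfl | hk0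
  · simp
  have hnk : ‖k‖ ≠ 0 := norm_ne_zero_iff.2 hk0
  have hv : ‖k‖⁻¹ • k ∈ closedBall (0 : X) 1 := by simp [norm_smul, hnk]
  have hdecomp : g (y + k) - g y - L k =
      ‖k‖ • (‖k‖⁻¹ • (g (y + ‖k‖ • ‖k‖⁻¹ • k) - g y) - L (‖k‖⁻¹ • k)) := by
    rw [smul_inv_smul₀ hnk, smul_sub, smul_inv_smul₀ hnk, map_smul, smul_inv_smul₀ hnk]
  rw [hdecomp, norm_smul, norm_norm, mul_comm, ← dist_eq_norm, dist_comm]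
  exact mul_le_mul_of_nonneg_right (hk hk0 _ hv).le (norm_nonneg k)

end Slopes

theorem compact_gateaux_implies_frechet_general
    {X Y Z : Type*} [NormedAddCommGroup X] [NormedSpace ℝ X]
    [NormedAddCommGroup Y] [NormedSpace ℝ Y]
    [NormedAddCommGroup Z] [NormedSpace ℝ Z]
    (U : Set X) (hU : IsOpen U) (T : Y →L[ℝ] X)
    (hT : IsCompact (closure (⇑T '' closedBall 0 1)))
    (f : X → Z) (hf : LocallyLipschitzOnSet f U)
    (y : Y) (hy : T y ∈ U)
    (A : X →L[ℝ] Z) (hA : HasGateauxDerivAt f A (T y)) :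
    HasFDerivAt (f ∘ T) (A.comp T) y := by
  obtain ⟨K, r, hr, hK⟩ := hf (T y) hy
  have hslope := hA.tendstoUniformlyOn_slope_of_lipschitzOnWith
    (inter_mem (hU.mem_nhds hy) (ball_mem_nhds _ hr)) hK (hT.totallyBounded.subset subset_closure)
  refine hasFDerivAt_of_tendstoUniformlyOn_slope ?_
  simpa only [ContinuousLinearMap.coe_comp, Function.comp_def, map_add, map_smul] using
    (hslope.comp T).mono (Set.subset_preimage_image T (closedBall 0 1))

/-- Let `X`, `Y`, `Z` be Banach spaces, `U ⊆ X` open and `T : Y → X` a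
compact bounded linear operator. If `f : U → Z` is locally Lipschitz and Gâteaux
differentiable at `T y ∈ U` with Gâteaux derivative `A`, then `f ∘ T` is Fréchet
differentiable at `y` with Fréchet derivative `A ∘ T`. -/
theorem compact_gateaux_implies_frechet
    {X Y Z : Type*} [NormedAddCommGroup X] [NormedSpace ℝ X] [CompleteSpace X]
    [NormedAddCommGroup Y] [NormedSpace ℝ Y] [CompleteSpace Y]
    [NormedAddCommGroup Z] [NormedSpace ℝ Z] [CompleteSpace Z]
    (U : Set X) (hU : IsOpen U) (T : Y →L[ℝ] X)
    (hT : IsCompact (closure (⇑T '' closedBall 0 1)))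
    (f : X → Z) (hf : LocallyLipschitzOnSet f U)
    (y : Y) (hy : T y ∈ U)
    (A : X →L[ℝ] Z) (hA : HasGateauxDerivAt f A (T y)) :
    HasFDerivAt (f ∘ T) (A.comp T) y :=
  compact_gateaux_implies_frechet_general U hU T hT f hf y hy A hA
end

section
/- There exists a Lipschitz function f : ℓ∞(ℕ) → ℝ which is Gâteaux differentiable at 0 but whose restriction to the closed subspace c₀(ℕ) of sequences converging to 0 is not Fréchet differentiable at 0. -/
open Filter Metric Topology ZeroAtInfty BoundedContinuousFunction

noncomputable section

namespace GC

def c (n : ℕ) : ℝ := (1/2 : ℝ) ^ n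

lemma c_pos (n : ℕ) : 0 < c n := pow_pos (by norm_num) n

lemma c_anti {m n : ℕ} (h : m ≤ n) : c n ≤ c m :=
  pow_le_pow_of_le_one (by norm_num) (by norm_num) h

/-- tail sup -/
def T (n : ℕ) (x : ℕ →ᵇ ℝ) : ℝ := ⨆ m, |x (n + 1 + m)|

lemma T_bdd (n : ℕ) (x : ℕ →ᵇ ℝ) :
    BddAbove (Set.range fun m => |x (n + 1 + m)|) := by
  refine ⟨‖x‖, ?_⟩
  rintro _ ⟨m, rfl⟩
  exact x.norm_coe_le_norm _

lemma le_T (n : ℕ) (x : ℕ →ᵇ ℝ) (m : ℕ) : |x (n + 1 + m)| ≤ T n x :=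
  le_ciSup (T_bdd n x) m

lemma T_nonneg (n : ℕ) (x : ℕ →ᵇ ℝ) : 0 ≤ T n x :=
  le_trans (abs_nonneg _) (le_T n x 0)

lemma T_le (n : ℕ) (x : ℕ →ᵇ ℝ) {b : ℝ} (hb : ∀ m, |x (n + 1 + m)| ≤ b) : T n x ≤ b :=
  ciSup_le hb

lemma T_smul_ge (n : ℕ) (x : ℕ →ᵇ ℝ) (t : ℝ) (ht : t ≠ 0) :
    |t| * T n x ≤ T n (t • x) := by
  have habs : 0 < |t| := abs_pos.mpr ht
  rw [mul_comm, ← le_div_iff₀ habs]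
  refine T_le n x fun m => ?_
  rw [le_div_iff₀ habs, mul_comm]
  calc |t| * |x (n + 1 + m)| = |(t • x) (n + 1 + m)| := by
        simp [abs_mul]
    _ ≤ T n (t • x) := le_T n (t • x) m

lemma T_lip (n : ℕ) (x y : ℕ →ᵇ ℝ) : T n x ≤ T n y + ‖x - y‖ := by
  refine T_le n x fun m => ?_
  have h1 : |x (n + 1 + m) - y (n + 1 + m)| ≤ ‖x - y‖ := by
    have := (x - y).norm_coe_le_norm (n + 1 + m)
    simpa using this
  have := abs_sub_abs_le_abs_sub (x (n + 1 + m)) (y (n + 1 + m))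
  have h2 := le_T n y m
  linarith

def phi (n : ℕ) (s : ℝ) : ℝ := max 0 (c n / 2 - |(|s| - c n)|)

lemma phi_nonneg (n : ℕ) (s : ℝ) : 0 ≤ phi n s := le_max_left _ _

lemma phi_le (n : ℕ) (s : ℝ) : phi n s ≤ c n / 2 := by
  refine max_le (le_of_lt (half_pos (c_pos n))) ?_
  have := abs_nonneg (|s| - c n)
  linarith

lemma phi_le_abs (n : ℕ) (s : ℝ) : phi n s ≤ |s| := by
  rcases le_or_gt (c n / 2 - |(|s| - c n)|) 0 with h | h
  · calc phi n s = 0 := max_eq_left h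
      _ ≤ |s| := abs_nonneg s
  · have h1 : |(|s| - c n)| < c n / 2 := by linarith
    have h2 : |s| > c n / 2 := by
      have := abs_lt.mp h1
      linarith
    calc phi n s ≤ c n / 2 := phi_le n s
      _ ≤ |s| := le_of_lt h2

lemma phi_eq_zero {n : ℕ} {s : ℝ} (h : |s| ≤ c n / 2) : phi n s = 0 := by
  apply max_eq_left
  have h0 := abs_nonneg s
  have : |(|s| - c n)| = c n - |s| := by
    rw [abs_of_nonpos (by linarith [c_pos n])]; ring
  rw [this]; linarith

lemma phi_peak (n : ℕ) {s : ℝ} (h : |s| = c n) : phi n s = c n / 2 := by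
  unfold phi
  rw [h]
  simp [le_of_lt (half_pos (c_pos n))]

lemma phi_lip (n : ℕ) (s u : ℝ) : phi n s ≤ phi n u + |s - u| := by
  have hA : |(|u| - c n)| ≤ |(|s| - c n)| + |s - u| := by
    have h1 : |(|u| - c n)| - |(|s| - c n)| ≤ |((|u| - c n) - (|s| - c n))| :=
      abs_sub_abs_le_abs_sub _ _
    have h2 : (|u| - c n) - (|s| - c n) = |u| - |s| := by ring
    have h3 : |(|u| - |s|)| ≤ |u - s| := abs_abs_sub_abs_le_abs_sub u s
    have h4 : |u - s| = |s - u| := abs_sub_comm u s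
    rw [h2] at h1
    linarith
  rcases le_total (c n / 2 - |(|s| - c n)|) 0 with h | h
  · have e : phi n s = 0 := max_eq_left h
    rw [e]
    have := phi_nonneg n u
    have := abs_nonneg (s - u)
    linarith
  · have e : phi n s = c n / 2 - |(|s| - c n)| := max_eq_right h
    rw [e]
    have := le_max_right 0 (c n / 2 - |(|u| - c n)|)
    have : c n / 2 - |(|u| - c n)| ≤ phi n u := le_max_right _ _
    linarith

def term (n : ℕ) (x : ℕ →ᵇ ℝ) : ℝ := max 0 (phi n (x n) - 2 * T n x)

lemma term_nonneg (n : ℕ) (x : ℕ →ᵇ ℝ) : 0 ≤ term n x := le_max_left _ _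

lemma term_le_half (n : ℕ) (x : ℕ →ᵇ ℝ) : term n x ≤ c n / 2 := by
  refine max_le (le_of_lt (half_pos (c_pos n))) ?_
  have := T_nonneg n x
  have := phi_le n (x n)
  linarith

lemma term_bdd (x : ℕ →ᵇ ℝ) : BddAbove (Set.range fun n => term n x) := by
  refine ⟨1/2, ?_⟩
  rintro _ ⟨n, rfl⟩
  calc term n x ≤ c n / 2 := term_le_half n x
    _ ≤ 1/2 := by
        have : c n ≤ 1 := by
          have := c_anti (Nat.zero_le n); simpa [c] using this
        linarith

def f (x : ℕ →ᵇ ℝ) : ℝ := ⨆ n, term n x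

lemma f_nonneg (x : ℕ →ᵇ ℝ) : 0 ≤ f x :=
  le_trans (term_nonneg 0 x) (le_ciSup (term_bdd x) 0)

lemma term_le_f (n : ℕ) (x : ℕ →ᵇ ℝ) : term n x ≤ f x := le_ciSup (term_bdd x) n

lemma f_le (x : ℕ →ᵇ ℝ) {b : ℝ} (hb : ∀ n, term n x ≤ b) : f x ≤ b := ciSup_le hb

lemma f_zero : f 0 = 0 := by
  apply le_antisymm
  · refine f_le 0 fun n => ?_
    refine max_le (le_refl 0) ?_
    have h1 : phi n ((0 : ℕ →ᵇ ℝ) n) = 0 := by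
      apply phi_eq_zero
      simp [le_of_lt (half_pos (c_pos n))]
    rw [h1]
    have := T_nonneg n (0 : ℕ →ᵇ ℝ)
    linarith
  · exact f_nonneg 0

lemma apply_le_norm (x : ℕ →ᵇ ℝ) (m : ℕ) : |x m| ≤ ‖x‖ := by
  have := x.norm_coe_le_norm m
  simpa using this

lemma sub_apply_le (x y : ℕ →ᵇ ℝ) (m : ℕ) : |x m - y m| ≤ ‖x - y‖ := by
  have := (x - y).norm_coe_le_norm m
  simpa using this

lemma term_lip (n : ℕ) (x y : ℕ →ᵇ ℝ) : term n x ≤ term n y + 3 * ‖x - y‖ := by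
  have h1 : phi n (x n) ≤ phi n (y n) + ‖x - y‖ :=
    le_trans (phi_lip n (x n) (y n)) (by linarith [sub_apply_le x y n])
  have h2 : T n y ≤ T n x + ‖x - y‖ := by
    have := T_lip n y x
    rw [norm_sub_rev] at this
    linarith
  have h3 : phi n (y n) - 2 * T n y ≤ term n y := le_max_right _ _
  have h4 : (0:ℝ) ≤ ‖x - y‖ := norm_nonneg _
  have h5 : 0 ≤ term n y := term_nonneg n y
  refine max_le (by linarith) (by linarith)

lemma f_lipschitz : LipschitzWith 3 f := by
  refine LipschitzWith.of_dist_le_mul fun x y => ?_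
  rw [Real.dist_eq, dist_eq_norm]
  have hc : ((3 : NNReal) : ℝ) = 3 := by norm_num
  rw [hc, abs_sub_le_iff]
  constructor
  · have : f x ≤ f y + 3 * ‖x - y‖ :=
      f_le x fun n => le_trans (term_lip n x y) (by linarith [term_le_f n y])
    linarith
  · have : f y ≤ f x + 3 * ‖y - x‖ :=
      f_le y fun n => le_trans (term_lip n y x) (by linarith [term_le_f n x])
    rw [norm_sub_rev] at this
    linarith

lemma key (h : ℕ →ᵇ ℝ) {ε : ℝ} (hε : 0 < ε) :
    ∃ δ > 0, ∀ t : ℝ, t ≠ 0 → |t| < δ → f (t • h) ≤ ε * |t| := by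
  set S := ⨅ n, T n h with hS
  have hbdd : BddBelow (Set.range fun n => T n h) := ⟨0, by rintro _ ⟨n, rfl⟩; exact T_nonneg n h⟩
  have hSle : ∀ n, S ≤ T n h := fun n => ciInf_le hbdd n
  obtain ⟨N, hN⟩ : ∃ N, T N h < S + ε / 2 :=
    exists_lt_of_ciInf_lt (lt_add_of_pos_right S (half_pos hε))
  refine ⟨c (N + 1) / (2 * (‖h‖ + 1)), div_pos (c_pos _) (by positivity), fun t ht htδ => ?_⟩
  have habs : (0:ℝ) < |t| := abs_pos.mpr ht
  have hεt : (0:ℝ) ≤ ε * |t| := by positivity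
  refine f_le _ fun n => ?_
  have hsmul : ∀ m, (t • h) m = t * h m := fun m => by simp
  rcases le_or_gt n N with hn | hn
  · -- small coordinates: bump not activated
    have hsm : |(t • h) n| ≤ c n / 2 := by
      rw [hsmul n, abs_mul]
      have h1 : |h n| ≤ ‖h‖ := apply_le_norm h n
      have h2 : |t| * |h n| ≤ |t| * (‖h‖ + 1) := by nlinarith [abs_nonneg (h n)]
      have h3 : |t| * (‖h‖ + 1) < c (N + 1) / (2 * (‖h‖ + 1)) * (‖h‖ + 1) := by
        have hpos : (0:ℝ) < ‖h‖ + 1 := by positivity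
        nlinarith
      have h4 : c (N + 1) / (2 * (‖h‖ + 1)) * (‖h‖ + 1) = c (N + 1) / 2 := by
        field_simp
      have h5 : c (N + 1) ≤ c n := c_anti (by omega)
      linarith
    have hphi : phi n ((t • h) n) = 0 := phi_eq_zero hsm
    unfold term
    rw [hphi]
    refine max_le hεt (by linarith [T_nonneg n (t • h)])
  · -- large coordinates: tail kills the bump
    have hhn : |h n| ≤ T N h := by
      have : n = N + 1 + (n - (N + 1)) := by omega
      rw [this]
      exact le_T N h _
    have hT : |t| * T n h ≤ T n (t • h) := T_smul_ge n h t ht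
    have hcore : phi n ((t • h) n) - 2 * T n (t • h) ≤ ε * |t| := by
      have h1 : phi n ((t • h) n) ≤ |(t • h) n| := phi_le_abs n _
      have h2 : |(t • h) n| = |t| * |h n| := by rw [hsmul n, abs_mul]
      have h3 : |h n| - 2 * T n h ≤ ε / 2 := by
        have := hSle n
        have := T_nonneg n h
        linarith
      have h4 : |t| * (|h n| - 2 * T n h) ≤ |t| * (ε / 2) := by nlinarith
      have h5 : ε / 2 * |t| ≤ ε * |t| := by nlinarith
      nlinarith
    exact max_le hεt hcore

/-- single coordinate element of `C₀` -/
def sgl (n : ℕ) (s : ℝ) : C₀(ℕ, ℝ) :=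
  ⟨⟨fun m => if m = n then s else 0, continuous_of_discreteTopology⟩, by
    refine Tendsto.congr' ?_ tendsto_const_nhds
    filter_upwards [((isCompact_singleton : IsCompact ({n} : Set ℕ))).compl_mem_cocompact] with m hm
    have hm' : m ≠ n := by simpa using hm
    simp [hm']⟩

lemma sgl_coe (n : ℕ) (s : ℝ) (m : ℕ) : (sgl n s).toBCF m = if m = n then s else 0 := rfl

lemma sgl_norm_le (n : ℕ) (s : ℝ) (hs : |s| ≤ c n) : ‖sgl n s‖ ≤ c n := by
  rw [← ZeroAtInftyContinuousMap.norm_toBCF_eq_norm]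
  refine (BoundedContinuousFunction.norm_le (le_of_lt (c_pos n))).mpr fun m => ?_
  rw [show ((sgl n s).toBCF m) = if m = n then s else 0 from rfl]
  rcases eq_or_ne m n with hmn | hmn
  · simpa [hmn] using hs
  · simp [hmn, le_of_lt (c_pos n)]

lemma sgl_neg (n : ℕ) (s : ℝ) : sgl n (-s) = -(sgl n s) := by
  ext m
  show (if m = n then -s else 0) = -(if m = n then s else 0)
  rcases eq_or_ne m n with hmn | hmn <;> simp [hmn]

lemma f_sgl (n : ℕ) (s : ℝ) (hs : |s| = c n) : f ((sgl n s).toBCF) = c n / 2 := by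
  set x := (sgl n s).toBCF with hx
  have hT : T n x = 0 := by
    refine le_antisymm (T_le n x fun m => ?_) (T_nonneg n x)
    have : x (n + 1 + m) = 0 := by
      rw [hx, sgl_coe]
      have : n + 1 + m ≠ n := by omega
      simp [this]
    simp [this]
  have hxn : x n = s := by rw [hx, sgl_coe]; simp
  have hterm : term n x = c n / 2 := by
    unfold term
    rw [hxn, hT, phi_peak n hs]
    simp [le_of_lt (half_pos (c_pos n))]
  refine le_antisymm (f_le x fun j => ?_) (hterm ▸ term_le_f n x)
  rcases eq_or_ne j n with hj | hj
  · rw [hj, hterm]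
  · have hxj : x j = 0 := by rw [hx, sgl_coe]; simp [hj]
    have : phi j (x j) = 0 := by
      rw [hxj]
      exact phi_eq_zero (by simpa using le_of_lt (half_pos (c_pos j)))
    unfold term
    rw [this]
    refine max_le (le_of_lt (half_pos (c_pos n))) ?_
    have := T_nonneg j x
    have := c_pos n
    linarith

lemma f_zero_c0 : f ((0 : C₀(ℕ, ℝ)).toBCF) = 0 := by
  have : ((0 : C₀(ℕ, ℝ)).toBCF) = 0 := by
    ext m
    rfl
  rw [this, f_zero]

end GC

/-- There exists a Lipschitz function `f : ℓ∞(ℕ) → ℝ` (here `ℓ∞(ℕ)` is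
the space `ℕ →ᵇ ℝ` of bounded sequences with the sup norm) which is Gâteaux
differentiable at `0`, but whose restriction to the closed subspace `c₀(ℕ)` of sequences
converging to `0` (i.e. its composition with the canonical inclusion
`C₀(ℕ, ℝ) → (ℕ →ᵇ ℝ)`) is not Fréchet differentiable at `0`. -/
theorem exists_lipschitz_gateaux_not_frechet_on_c0 :
    ∃ f : (ℕ →ᵇ ℝ) → ℝ,
      (∃ K : NNReal, LipschitzWith K f) ∧
      GateauxDifferentiableAt f 0 ∧
      ¬ DifferentiableAt ℝ (fun x : C₀(ℕ, ℝ) => f x.toBCF) 0 := by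
  refine ⟨GC.f, ⟨3, GC.f_lipschitz⟩, ⟨0, fun h => ?_⟩, fun hdiff => ?_⟩
  · -- Gâteaux differentiable at 0 with derivative 0
    simp only [ContinuousLinearMap.zero_apply, zero_add, GC.f_zero, sub_zero, smul_eq_mul]
    rw [Metric.tendsto_nhdsWithin_nhds]
    intro ε hε
    obtain ⟨δ, hδ, H⟩ := GC.key h (half_pos hε)
    refine ⟨δ, hδ, fun t ht htd => ?_⟩
    have ht0 : t ≠ 0 := ht
    have habs : (0:ℝ) < |t| := abs_pos.mpr ht0
    have htd' : |t| < δ := by rwa [Real.dist_eq, sub_zero] at htd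
    have hb := H t ht0 htd'
    rw [Real.dist_eq, sub_zero, abs_mul, abs_inv, abs_of_nonneg (GC.f_nonneg _)]
    have : |t|⁻¹ * GC.f (t • h) ≤ |t|⁻¹ * (ε / 2 * |t|) := by
      have := inv_nonneg.mpr (le_of_lt habs)
      nlinarith
    have heq : |t|⁻¹ * (ε / 2 * |t|) = ε / 2 := by
      field_simp
    rw [heq] at this
    linarith
  · -- not Fréchet differentiable on c₀
    set g := fun x : C₀(ℕ, ℝ) => GC.f x.toBCF with hg
    have hB := hdiff.hasFDerivAt
    set B := fderiv ℝ g 0 with hBdef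
    rw [hasFDerivAt_iff_isLittleO_nhds_zero] at hB
    have hev := hB.def (by norm_num : (0:ℝ) < 1/4)
    rw [Metric.eventually_nhds_iff] at hev
    obtain ⟨δ, hδ, Hev⟩ := hev
    obtain ⟨n, hn⟩ := exists_pow_lt_of_lt_one hδ (by norm_num : (1/2 : ℝ) < 1)
    have hcδ : GC.c n < δ := hn
    set k : C₀(ℕ, ℝ) := GC.sgl n (GC.c n) with hk
    have hknorm : ‖k‖ ≤ GC.c n := GC.sgl_norm_le n _ (by rw [abs_of_pos (GC.c_pos n)])
    have hkdist : dist k 0 < δ := by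
      rw [dist_zero_right]; linarith
    have hkdist' : dist (-k) 0 < δ := by
      rw [dist_zero_right, norm_neg]; linarith
    have h1 := Hev hkdist
    have h2 := Hev hkdist'
    have hgk : g (0 + k) = GC.c n / 2 := by
      rw [zero_add, hg]
      exact GC.f_sgl n _ (abs_of_pos (GC.c_pos n))
    have hgk' : g (0 + -k) = GC.c n / 2 := by
      rw [zero_add, hg]
      have : -k = GC.sgl n (-(GC.c n)) := by rw [GC.sgl_neg]
      rw [this]
      exact GC.f_sgl n _ (by rw [abs_neg, abs_of_pos (GC.c_pos n)])
    have hg0 : g 0 = 0 := GC.f_zero_c0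
    rw [hgk, hg0, sub_zero] at h1
    rw [hgk', hg0, sub_zero] at h2
    rw [map_neg] at h2
    have hn1 : ‖GC.c n / 2 - B k‖ ≤ 1/4 * ‖k‖ := h1
    have hn2 : ‖GC.c n / 2 - -B k‖ ≤ 1/4 * ‖-k‖ := h2
    rw [norm_neg] at hn2
    have ha1 : |GC.c n / 2 - B k| ≤ 1/4 * GC.c n := by
      refine le_trans hn1 ?_
      nlinarith
    have ha2 : |GC.c n / 2 + B k| ≤ 1/4 * GC.c n := by
      have : GC.c n / 2 - -B k = GC.c n / 2 + B k := by ring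
      rw [this] at hn2
      refine le_trans hn2 ?_
      nlinarith
    have hsum : GC.c n = (GC.c n / 2 - B k) + (GC.c n / 2 + B k) := by ring
    have hpos := GC.c_pos n
    have hfin : GC.c n ≤ 1/2 * GC.c n := by
      calc GC.c n = |GC.c n| := (abs_of_pos hpos).symm
        _ = |(GC.c n / 2 - B k) + (GC.c n / 2 + B k)| := by rw [← hsum]
        _ ≤ |GC.c n / 2 - B k| + |GC.c n / 2 + B k| := abs_add_le _ _
        _ ≤ 1/2 * GC.c n := by linarith
    linarith
end
end

section
/- Let X be a normed space and (xₙ) a β-separated sequence in X, i.e., all the xₙ have the same norm and ‖xₙ − xₘ‖ ≥ β whenever n ≠ m, with β > 0. Then (xₙ) is β/4-cone-separated: for n ≠ m, the cones {λ a : λ > 0, a ∈ B(xₙ, β/4)} and {λ a : λ > 0, a ∈ B(xₘ, β/4)} are disjoint. -/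
open Metric

/-- Let `(xₙ)` be a β-separated sequence in a normed space `X` (all terms
have the same norm and `‖xₙ - xₘ‖ ≥ β` for `n ≠ m`, with `β > 0`). Then `(xₙ)` is
`β/4`-cone-separated: for `n ≠ m` the cones generated by the balls `B(xₙ, β/4)` and
`B(xₘ, β/4)` intersect only in the set `{0}`. -/
theorem coneSeparated_of_separated
    {X : Type*} [NormedAddCommGroup X] [NormedSpace ℝ X]
    (x : ℕ → X) (β : ℝ) (hβ : 0 < β)
    (hnorm : ∀ n m, ‖x n‖ = ‖x m‖)
    (hsep : ∀ n m, n ≠ m → β ≤ ‖x n - x m‖) :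
    ∀ n m, n ≠ m →
      {z : X | ∃ l : ℝ, 0 < l ∧ ∃ a ∈ ball (x n) (β / 4), z = l • a} ∩
        {z : X | ∃ l : ℝ, 0 < l ∧ ∃ a ∈ ball (x m) (β / 4), z = l • a} ⊆ {0} := by
  intro n m hnm z hz
  exfalso
  obtain ⟨⟨l, hl, a, ha, hza⟩, ⟨μ, hμ, b, hb, hzb⟩⟩ := hz
  have hb' : b = (μ⁻¹ * l) • a := by
    have h : μ • b = l • a := by rw [← hza, ← hzb]
    rw [mul_smul, ← h, inv_smul_smul₀ hμ.ne']
  set t := μ⁻¹ * l with htdef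
  have htpos : 0 < t := mul_pos (inv_pos.2 hμ) hl
  rw [mem_ball, dist_eq_norm] at ha hb
  rw [hb'] at hb
  have h1 : |‖a‖ - ‖x n‖| < β / 4 := lt_of_le_of_lt (abs_norm_sub_norm_le _ _) ha
  have h2 : |‖t • a‖ - ‖x m‖| < β / 4 := lt_of_le_of_lt (abs_norm_sub_norm_le _ _) hb
  have hta : ‖t • a‖ = t * ‖a‖ := by
    rw [norm_smul, Real.norm_of_nonneg htpos.le]
  have hmid : ‖a - t • a‖ < β / 2 := by
    have e1 : a - t • a = (1 - t) • a := by rw [sub_smul, one_smul]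
    have e2 : ‖a - t • a‖ = |‖a‖ - ‖t • a‖| := by
      rw [e1, norm_smul, Real.norm_eq_abs, hta, show |1 - t| * ‖a‖ = |(1 - t) * ‖a‖| by
        rw [abs_mul, abs_norm]]
      congr 1; ring
    have e3 : |‖a‖ - ‖t • a‖| ≤ |‖a‖ - ‖x n‖| + |‖t • a‖ - ‖x m‖| := by
      rw [hnorm n m]
      have := abs_sub_le (‖a‖) (‖x m‖) (‖t • a‖)
      rw [abs_sub_comm (‖x m‖) (‖t • a‖)] at this
      exact this
    rw [e2]; linarith
  have htri : ‖x n - x m‖ ≤ ‖x n - a‖ + ‖a - t • a‖ + ‖t • a - x m‖ := by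
    have := norm_sub_le_norm_sub_add_norm_sub (x n) a (x m)
    have h4 := norm_sub_le_norm_sub_add_norm_sub a (t • a) (x m)
    linarith
  have hxn : ‖x n - a‖ = ‖a - x n‖ := norm_sub_rev _ _
  have := hsep n m hnm
  linarith
end

section
/- Let X, Y be Banach spaces and T : Y → X a bounded linear operator which is not compact. Then there exists a linear map L : ℓ∞(ℕ) → (X → ℝ) which is injective and such that for every μ ∈ ℓ∞(ℕ): L μ vanishes at 0, L μ is Lipschitz with best (smallest) Lipschitz constant equal to ‖μ‖∞, L μ is Gâteaux differentiable at 0, and if μ ≠ 0 then (L μ) ∘ T is not Fréchet differentiable at 0. -/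
/-!
Pick a `δ`-separated sequence `T (y n)` in the image of the unit ball (at most one term has norm
below `δ / 2`, drop it). Shrinking it geometrically gives centres `p n = β ^ n • T (y n)` such
that the balls `B (p n, r n)`, `r n = ε β ^ n`, are far apart, miss `0`, and every line through
`0` meets only finitely many of them. Put on the `n`-th ball the cone of height `r n` scaled by
`μ k`, where every index `k` labels infinitely many balls. The sum is `‖μ‖∞`-Lipschitz with that
best constant, and vanishes near `0` on every line, so it is Gâteaux differentiable at `0` with
derivative `0`. Composed with `T` it takes the value `μ k r n` at `β ^ n • y n`, a point of norm
`≤ β ^ n`, so it is not `o(‖·‖)` at `0` unless `μ = 0`.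
-/
open Filter Metric Topology

open scoped ENNReal

section PseudoMetric

variable {α : Type*} [PseudoMetricSpace α]

theorem exists_pairwise_le_dist_of_not_totallyBounded {s : Set α} (hs : ¬TotallyBounded s) :
    ∃ δ > 0, ∃ u : ℕ → α, (∀ n, u n ∈ s) ∧ Pairwise fun m n => δ ≤ dist (u m) (u n) := by
  rw [totallyBounded_iff] at hs
  push Not at hs
  obtain ⟨δ, hδ, hnet⟩ := hs
  have hfar : ∀ t : Set α, t.Finite → ∃ x, x ∈ s ∧ ∀ y ∈ t, δ ≤ dist x y := by
    intro t ht
    obtain ⟨x, hxs, hx⟩ := Set.not_subset.mp (hnet t ht)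
    exact ⟨x, hxs, fun y hy => not_lt.mp fun hlt => hx (Set.mem_biUnion hy hlt)⟩
  obtain ⟨u, hu⟩ := Set.seq_of_forall_finite_exists hfar
  refine ⟨δ, hδ, u, fun n => (hu n).1, fun m n hmn => ?_⟩
  rcases hmn.lt_or_gt with h | h
  · rw [dist_comm]
    exact (hu n).2 _ ⟨m, h, rfl⟩
  · exact (hu m).2 _ ⟨n, h, rfl⟩

/-- Cover `K` by finitely many balls of radius `δ / 2 - ε`; each of them is `δ / 2`-close to at
most one point of the sequence. -/
theorem finite_setOf_exists_dist_lt_of_totallyBounded {u : ℕ → α} {δ ε : ℝ}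
    (hu : Pairwise fun m n => δ ≤ dist (u m) (u n)) {K : Set α} (hK : TotallyBounded K)
    (hεδ : 2 * ε < δ) : {n | ∃ k ∈ K, dist (u n) k < ε}.Finite := by
  obtain ⟨t, ht, hKt⟩ := totallyBounded_iff.mp hK (δ / 2 - ε) (by linarith)
  have hsub : ∀ c, {n | dist (u n) c < δ / 2}.Subsingleton := fun c m hm n hn =>
    by_contra fun hne => (hu hne).not_gt <| by
      linarith [dist_triangle_right (u m) (u n) c, hm.out, hn.out]
  refine (ht.biUnion fun c _ => (hsub c).finite).subset ?_
  rintro n ⟨k, hkK, hk⟩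
  obtain ⟨c, hct, hkc⟩ := Set.mem_iUnion₂.mp (hKt hkK)
  refine Set.mem_biUnion hct (?_ : dist (u n) c < δ / 2)
  linarith [dist_triangle (u n) k c, mem_ball.mp hkc]

end PseudoMetric

theorem exists_forall_le_norm_add_of_pairwise_le_dist {F : Type*} [SeminormedAddCommGroup F]
    {u : ℕ → F} {δ : ℝ} (hu : Pairwise fun m n => δ ≤ dist (u m) (u n)) :
    ∃ N, ∀ n, δ / 2 ≤ ‖u (n + N)‖ := by
  by_cases h : ∃ m, ‖u m‖ < δ / 2
  · obtain ⟨m, hm⟩ := h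
    refine ⟨m + 1, fun n => ?_⟩
    have := hu (show n + (m + 1) ≠ m by omega)
    linarith [dist_le_norm_add_norm (u (n + (m + 1))) (u m)]
  · exact ⟨0, fun n => not_lt.mp fun hn => h ⟨n + 0, hn⟩⟩

section Normed

variable {E : Type*} [NormedAddCommGroup E] [NormedSpace ℝ E]

/-- Rescaled by `t n`, a point of the line in the `n`-th ball brings `u n` within `ε` of a bounded,
hence totally bounded, piece of the line. -/
theorem finite_setOf_exists_dist_smul_lt {u : ℕ → E} {δ ε M : ℝ}
    (hu : Pairwise fun m n => δ ≤ dist (u m) (u n)) (huM : ∀ n, ‖u n‖ ≤ M) (hεδ : 2 * ε < δ)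
    {t : ℕ → ℝ} (ht : ∀ n, 0 < t n) (w : E) :
    {n | ∃ s : ℝ, dist (s • w) (t n • u n) < ε * t n}.Finite := by
  set K : Set E := Subtype.val '' closedBall (0 : ℝ ∙ w) (M + ε)
  have hK : TotallyBounded K :=
    ((isCompact_closedBall _ _).image continuous_subtype_val).totallyBounded
  refine (finite_setOf_exists_dist_lt_of_totallyBounded hu hK hεδ).subset ?_
  rintro n ⟨s, hs⟩
  have hdist : dist (((t n)⁻¹ * s) • w) (u n) < ε := by
    have hscale : dist (((t n)⁻¹ * s) • w) (u n) = (t n)⁻¹ * dist (s • w) (t n • u n) := by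
      conv_lhs => rw [← inv_smul_smul₀ (ht n).ne' (u n), mul_smul]
      rw [dist_smul₀, Real.norm_of_nonneg (inv_nonneg.mpr (ht n).le)]
    rw [hscale, inv_mul_lt_iff₀ (ht n)]
    linarith
  refine ⟨_, ⟨⟨_, Submodule.smul_mem _ _ (Submodule.mem_span_singleton_self w)⟩, ?_, rfl⟩,
    (dist_comm _ _).trans_lt hdist⟩
  rw [mem_closedBall_zero_iff, Submodule.coe_norm]
  linarith [norm_le_norm_add_norm_sub' (((t n)⁻¹ * s) • w) (u n), huM n,
    dist_eq_norm (((t n)⁻¹ * s) • w) (u n)]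

theorem eventually_forall_le_dist_smul {p : ℕ → E} {r : ℕ → ℝ} {w : E}
    (hfin : {n | ∃ s : ℝ, dist (s • w) (p n) < r n}.Finite) (hr : ∀ n, r n < ‖p n‖) :
    ∀ᶠ s in 𝓝 (0 : ℝ), ∀ n, r n ≤ dist (s • w) (p n) := by
  have hnear : ∀ n ∈ {n | ∃ s : ℝ, dist (s • w) (p n) < r n}, ∀ᶠ s in 𝓝 (0 : ℝ),
      r n ≤ dist (s • w) (p n) := by
    intro n _
    have hcont : Continuous fun s : ℝ => dist (s • w) (p n) := by fun_prop
    have h0 : r n < dist ((0 : ℝ) • w) (p n) := by simpa using hr n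
    exact ((hcont.tendsto 0).eventually (lt_mem_nhds h0)).mono fun _ h => h.le
  filter_upwards [(hfin.eventually_all).mpr hnear] with s hs n
  by_cases hn : ∃ s : ℝ, dist (s • w) (p n) < r n
  · exact hs n hn
  · exact not_lt.mp fun h => hn ⟨s, h⟩

theorem pairwise_add_le_dist_pow_smul {z : ℕ → E} {a M β ε : ℝ} (hza : ∀ n, a ≤ ‖z n‖)
    (hzM : ∀ n, ‖z n‖ ≤ M) (hβ₀ : 0 < β) (hβ₁ : β ≤ 1) (hε₀ : 0 ≤ ε) (hε : β * M + 2 * ε ≤ a) :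
    Pairwise fun m n => ε * β ^ m + ε * β ^ n ≤ dist (β ^ m • z m) (β ^ n • z n) := by
  have hnorm : ∀ n, ‖β ^ n • z n‖ = β ^ n * ‖z n‖ := fun n => by
    rw [norm_smul, norm_pow, Real.norm_of_nonneg hβ₀.le]
  have hlt : ∀ m n, m < n → ε * β ^ m + ε * β ^ n ≤ dist (β ^ m • z m) (β ^ n • z n) := by
    intro m n hmn
    have hpow : β ^ n ≤ β ^ m * β := by
      rw [← pow_succ]; exact pow_le_pow_of_le_one hβ₀.le hβ₁ hmn
    have hpow₀ : 0 < β ^ m := pow_pos hβ₀ m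
    calc ε * β ^ m + ε * β ^ n ≤ β ^ m * (2 * ε) := by
          nlinarith [pow_le_pow_of_le_one hβ₀.le hβ₁ hmn.le]
      _ ≤ β ^ m * a - β ^ m * β * M := by nlinarith
      _ ≤ β ^ m * ‖z m‖ - β ^ n * ‖z n‖ := by
          gcongr
          · exact hza m
          · linarith [norm_nonneg (z n), hzM n]
      _ ≤ dist (β ^ m • z m) (β ^ n • z n) := by
          rw [dist_eq_norm, ← hnorm, ← hnorm]; exact norm_sub_norm_le _ _
  intro m n hmn
  rcases hmn.lt_or_gt with h | h
  · exact hlt m n h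
  · rw [dist_comm, add_comm]; exact hlt n m h

end Normed

section Differentiability

variable {E F : Type*} [NormedAddCommGroup E] [NormedSpace ℝ E]
  [NormedAddCommGroup F] [NormedSpace ℝ F]

theorem hasGateauxDerivAt_zero_of_eventually_eq {f : E → F} {x : E}
    (h : ∀ v : E, ∀ᶠ t in 𝓝 (0 : ℝ), f (x + t • v) = f x) : HasGateauxDerivAt f 0 x := by
  intro v
  rw [zero_apply]
  refine tendsto_const_nhds.congr' ?_
  filter_upwards [nhdsWithin_le_nhds (h v)] with t ht
  rw [ht, sub_self, smul_zero]

theorem HasFDerivAt.eq_zero_of_eventually_eq {f : E → F} {f' : E →L[ℝ] F} {x : E}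
    (hf : HasFDerivAt f f' x) (h : ∀ v : E, ∀ᶠ t in 𝓝 (0 : ℝ), f (x + t • v) = f x) :
    f' = 0 := by
  ext v
  exact (hf.hasLineDerivAt v).unique ((hasDerivAt_const (0 : ℝ) (f x)).congr_of_eventuallyEq (h v))

end Differentiability

section Cone

variable {α : Type*} [PseudoMetricSpace α]

def cone (p : α) (r : ℝ) (x : α) : ℝ := max (r - dist x p) 0

theorem cone_nonneg (p : α) (r : ℝ) (x : α) : 0 ≤ cone p r x := le_max_right _ _

theorem cone_eq_zero_iff {p : α} {r : ℝ} {x : α} : cone p r x = 0 ↔ r ≤ dist x p := by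
  simp [cone]

theorem cone_of_dist_le {p : α} {r : ℝ} {x : α} (h : dist x p ≤ r) :
    cone p r x = r - dist x p :=
  max_eq_left (sub_nonneg.mpr h)

theorem abs_cone_sub_cone_le (p : α) (r : ℝ) (x x' : α) :
    |cone p r x - cone p r x'| ≤ dist x x' :=
  (abs_max_sub_max_le_abs _ _ _).trans <| by
    rw [sub_sub_sub_cancel_left, abs_sub_comm]; exact abs_dist_sub_le x x' p

variable {p : ℕ → α} {r : ℕ → ℝ}

theorem forall_ne_cone_eq_zero (hsep : Pairwise fun m n => r m + r n ≤ dist (p m) (p n))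
    {x : α} {n : ℕ} (hx : dist x (p n) < r n) : ∀ m ≠ n, cone (p m) (r m) x = 0 := fun m hmn =>
  cone_eq_zero_iff.mpr (by linarith [hsep hmn, dist_triangle_left (p m) (p n) x])

theorem exists_forall_ne_cone_eq_zero (hsep : Pairwise fun m n => r m + r n ≤ dist (p m) (p n))
    (x : α) : ∃ n, ∀ m ≠ n, cone (p m) (r m) x = 0 := by
  by_cases h : ∃ n, dist x (p n) < r n
  · obtain ⟨n, hn⟩ := h
    exact ⟨n, forall_ne_cone_eq_zero hsep hn⟩
  · exact ⟨0, fun m _ => cone_eq_zero_iff.mpr (not_lt.mp fun hm => h ⟨m, hm⟩)⟩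

variable (p r) in
noncomputable def coneSeries (c : ℕ → ℝ) (x : α) : ℝ := ∑' n, c n * cone (p n) (r n) x

theorem coneSeries_eq_of_forall_ne {x : α} {n : ℕ} (h : ∀ m ≠ n, cone (p m) (r m) x = 0)
    (c : ℕ → ℝ) : coneSeries p r c x = c n * cone (p n) (r n) x :=
  tsum_eq_single n fun m hm => by rw [h m hm, mul_zero]

theorem coneSeries_eq_zero {x : α} (h : ∀ n, r n ≤ dist x (p n)) (c : ℕ → ℝ) :
    coneSeries p r c x = 0 := by
  simp [coneSeries, cone_eq_zero_iff.mpr (h _)]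

variable (hsep : Pairwise fun m n => r m + r n ≤ dist (p m) (p n))
include hsep

theorem coneSeries_of_dist_lt {x : α} {n : ℕ} (hx : dist x (p n) < r n) (c : ℕ → ℝ) :
    coneSeries p r c x = c n * (r n - dist x (p n)) := by
  rw [coneSeries_eq_of_forall_ne (forall_ne_cone_eq_zero hsep hx), cone_of_dist_le hx.le]

theorem coneSeries_apply_self {n : ℕ} (hr : 0 < r n) (c : ℕ → ℝ) :
    coneSeries p r c (p n) = c n * r n := by
  rw [coneSeries_of_dist_lt hsep (by rwa [dist_self]), dist_self, sub_zero]

theorem coneSeries_add (c d : ℕ → ℝ) :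
    coneSeries p r (c + d) = coneSeries p r c + coneSeries p r d := by
  funext x
  obtain ⟨n, hn⟩ := exists_forall_ne_cone_eq_zero hsep x
  simp only [Pi.add_apply, coneSeries_eq_of_forall_ne hn, add_mul]

theorem coneSeries_smul (a : ℝ) (c : ℕ → ℝ) :
    coneSeries p r (a • c) = a • coneSeries p r c := by
  funext x
  obtain ⟨n, hn⟩ := exists_forall_ne_cone_eq_zero hsep x
  simp only [Pi.smul_apply, coneSeries_eq_of_forall_ne hn, smul_eq_mul, mul_assoc]

/-- Either one of the two cones vanishes and the other is `1`-Lipschitz, or both points lie in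
their own balls, which are separated. -/
theorem cone_add_cone_le_dist {m n : ℕ} (hmn : m ≠ n) {x x' : α}
    (hx : cone (p n) (r n) x = 0) (hx' : cone (p m) (r m) x' = 0) :
    cone (p m) (r m) x + cone (p n) (r n) x' ≤ dist x x' := by
  rcases eq_or_lt_of_le (cone_nonneg (p m) (r m) x) with hm | hm
  · have := abs_cone_sub_cone_le (p n) (r n) x' x
    rw [hx, sub_zero, abs_of_nonneg (cone_nonneg _ _ _), dist_comm] at this
    linarith
  rcases eq_or_lt_of_le (cone_nonneg (p n) (r n) x') with hn | hn
  · have := abs_cone_sub_cone_le (p m) (r m) x x'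
    rw [hx', sub_zero, abs_of_nonneg (cone_nonneg _ _ _)] at this
    linarith
  have hxm : dist x (p m) < r m := not_le.mp fun h => hm.ne' (cone_eq_zero_iff.mpr h)
  have hxn : dist x' (p n) < r n := not_le.mp fun h => hn.ne' (cone_eq_zero_iff.mpr h)
  rw [cone_of_dist_le hxm.le, cone_of_dist_le hxn.le]
  linarith [hsep hmn, dist_triangle4 (p m) x x' (p n), dist_comm (p m) x]

theorem dist_coneSeries_le {c : ℕ → ℝ} {C : ℝ} (hc : ∀ n, |c n| ≤ C) (x x' : α) :
    dist (coneSeries p r c x) (coneSeries p r c x') ≤ C * dist x x' := by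
  obtain ⟨m, hm⟩ := exists_forall_ne_cone_eq_zero hsep x
  obtain ⟨n, hn⟩ := exists_forall_ne_cone_eq_zero hsep x'
  rw [coneSeries_eq_of_forall_ne hm, coneSeries_eq_of_forall_ne hn, Real.dist_eq]
  obtain rfl | hmn := eq_or_ne m n
  · rw [← mul_sub, abs_mul]
    exact mul_le_mul (hc m) (abs_cone_sub_cone_le _ _ _ _) (abs_nonneg _)
      ((abs_nonneg _).trans (hc m))
  · calc |c m * cone (p m) (r m) x - c n * cone (p n) (r n) x'|
        ≤ |c m| * cone (p m) (r m) x + |c n| * cone (p n) (r n) x' := by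
          refine (abs_sub _ _).trans_eq ?_
          rw [abs_mul, abs_mul, abs_of_nonneg (cone_nonneg _ _ _),
            abs_of_nonneg (cone_nonneg _ _ _)]
      _ ≤ C * (cone (p m) (r m) x + cone (p n) (r n) x') := by
          rw [mul_add]
          gcongr <;> first | exact hc _ | exact cone_nonneg _ _ _
      _ ≤ C * dist x x' :=
          mul_le_mul_of_nonneg_left (cone_add_cone_le_dist hsep hmn (hm n hmn.symm) (hn m hmn))
            ((abs_nonneg _).trans (hc m))

end Cone

section ConeSeriesNormed

variable {E : Type*} [NormedAddCommGroup E] [NormedSpace ℝ E] {p : ℕ → E} {r : ℕ → ℝ}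

/-- Near `p n`, `coneSeries p r c` has slope exactly `|c n|`. -/
theorem abs_le_of_lipschitzWith_coneSeries
    (hsep : Pairwise fun m n => r m + r n ≤ dist (p m) (p n)) (hr : ∀ n, 0 < r n)
    {c : ℕ → ℝ} {K : NNReal} (hK : LipschitzWith K (coneSeries p r c)) (n : ℕ) : |c n| ≤ K := by
  have : Nontrivial E := nontrivial_of_ne (p 0) (p 1) fun h => by
    have : r 0 + r 1 ≤ dist (p 0) (p 1) := hsep zero_ne_one
    rw [h, dist_self] at this
    linarith [hr 0, hr 1]
  obtain ⟨v, hv⟩ := exists_norm_eq E (half_pos (hr n)).le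
  have hdist : dist (p n + v) (p n) = r n / 2 := by rw [dist_self_add_left, hv]
  have hK' := hK.dist_le_mul (p n + v) (p n)
  rw [coneSeries_apply_self hsep (hr n), coneSeries_of_dist_lt hsep (by linarith [hr n]),
    hdist, Real.dist_eq, ← mul_sub, show r n - r n / 2 - r n = -(r n / 2) by ring, abs_mul,
    abs_neg, abs_of_pos (half_pos (hr n))] at hK'
  exact le_of_mul_le_mul_right hK' (half_pos (hr n))

variable (hline : ∀ w : E, ∀ᶠ s in 𝓝 (0 : ℝ), ∀ n, r n ≤ dist (s • w) (p n))
include hline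

theorem coneSeries_smul_eventually_eq_zero (c : ℕ → ℝ) (w : E) :
    ∀ᶠ s in 𝓝 (0 : ℝ), coneSeries p r c (s • w) = 0 :=
  (hline w).mono fun _ hs => coneSeries_eq_zero hs c

theorem coneSeries_apply_zero (c : ℕ → ℝ) : coneSeries p r c 0 = 0 := by
  simpa using (coneSeries_smul_eventually_eq_zero hline c 0).self_of_nhds

theorem gateauxDifferentiableAt_coneSeries (c : ℕ → ℝ) :
    GateauxDifferentiableAt (coneSeries p r c) 0 :=
  ⟨0, hasGateauxDerivAt_zero_of_eventually_eq fun w =>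
    (coneSeries_smul_eventually_eq_zero hline c w).mono fun s hs => by
      rw [zero_add, hs, coneSeries_apply_zero hline]⟩

end ConeSeriesNormed

section NotFrechet

variable {E Y : Type*} [NormedAddCommGroup E] [NormedSpace ℝ E]
  [NormedAddCommGroup Y] [NormedSpace ℝ Y] {p : ℕ → E} {r : ℕ → ℝ}

/-- The derivative of `g = coneSeries p r c ∘ T` at `0` vanishes on every line, hence is `0`, so
`c n * r n = g (y n) = o(‖y n‖) = o(r n)`. -/
theorem tendsto_of_differentiableAt_coneSeries_comp
    (hsep : Pairwise fun m n => r m + r n ≤ dist (p m) (p n)) (hr : ∀ n, 0 < r n)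
    (hr₀ : Tendsto r atTop (𝓝 0))
    (hline : ∀ w : E, ∀ᶠ s in 𝓝 (0 : ℝ), ∀ n, r n ≤ dist (s • w) (p n))
    (T : Y →L[ℝ] E) {y : ℕ → Y} (hTy : ∀ n, T (y n) = p n) {ε : ℝ} (hε : 0 < ε)
    (hy : ∀ n, ε * ‖y n‖ ≤ r n) {c : ℕ → ℝ}
    (hc : DifferentiableAt ℝ (coneSeries p r c ∘ T) 0) : Tendsto c atTop (𝓝 0) := by
  set g := coneSeries p r c ∘ T
  have hg₀ : g 0 = 0 := by simp [g, coneSeries_apply_zero hline]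
  have hg : HasFDerivAt g (0 : Y →L[ℝ] ℝ) 0 := by
    have hd := hc.hasFDerivAt
    rwa [hd.eq_zero_of_eventually_eq fun v => ?_] at hd
    filter_upwards [coneSeries_smul_eventually_eq_zero hline c (T v)] with t ht
    simp [g, ht, coneSeries_apply_zero hline]
  have hlo : (fun v => g v) =o[𝓝 0] fun v => v := by
    simpa [hg₀] using hasFDerivAt_iff_isLittleO_nhds_zero.mp hg
  have hyr : y =O[atTop] r := Asymptotics.IsBigO.of_bound ε⁻¹ (Eventually.of_forall fun n => by
    rw [Real.norm_of_nonneg (hr n).le, le_inv_mul_iff₀ hε]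
    exact hy n)
  have hy₀ : Tendsto y atTop (𝓝 0) := hyr.trans_tendsto hr₀
  refine ((hlo.comp_tendsto hy₀).trans_isBigO hyr).tendsto_div_nhds_zero.congr fun n => ?_
  simp only [Function.comp_apply, g, hTy, coneSeries_apply_self hsep (hr n)]
  exact mul_div_cancel_right₀ _ (hr n).ne'

end NotFrechet

/-- The centres are `β ^ n • T (y n)` for a `δ`-separated sequence `T (y n)` in the image of the
unit ball, with `β = δ / (4 * ‖T‖)` and radii `δ / 8 * β ^ n`. -/
theorem exists_balls_of_not_isCompact_image_closedBall
    {X Y : Type*} [NormedAddCommGroup X] [NormedSpace ℝ X] [CompleteSpace X]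
    [NormedAddCommGroup Y] [NormedSpace ℝ Y]
    (T : Y →L[ℝ] X) (hT : ¬IsCompact (closure (T '' closedBall 0 1))) :
    ∃ (p : ℕ → X) (r : ℕ → ℝ) (y : ℕ → Y) (ε : ℝ), (∀ n, 0 < r n) ∧ Tendsto r atTop (𝓝 0) ∧
      (Pairwise fun m n => r m + r n ≤ dist (p m) (p n)) ∧
      (∀ w : X, ∀ᶠ s in 𝓝 (0 : ℝ), ∀ n, r n ≤ dist (s • w) (p n)) ∧
      (∀ n, T (y n) = p n) ∧ 0 < ε ∧ ∀ n, ε * ‖y n‖ ≤ r n := by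
  obtain ⟨δ, hδ, u, hu, husep⟩ := exists_pairwise_le_dist_of_not_totallyBounded fun h =>
    hT (h.closure.isCompact_of_isClosed isClosed_closure)
  obtain ⟨N, hN⟩ := exists_forall_le_norm_add_of_pairwise_le_dist husep
  choose y hy hTy using fun n => hu (n + N)
  have hy₁ : ∀ n, ‖y n‖ ≤ 1 := fun n => by simpa using hy n
  have hzsep : Pairwise fun m n => δ ≤ dist (T (y m)) (T (y n)) := fun m n hmn => by
    simpa only [hTy] using husep (show m + N ≠ n + N by omega)
  have hzlow : ∀ n, δ / 2 ≤ ‖T (y n)‖ := fun n => (hTy n).symm ▸ hN n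
  have hzM : ∀ n, ‖T (y n)‖ ≤ ‖T‖ := fun n => by simpa using T.le_opNorm_of_le (hy₁ n)
  have hδT : δ ≤ 2 * ‖T‖ := by linarith [hzlow 0, hzM 0]
  have hT₀ : 0 < ‖T‖ := by linarith
  set β := δ / (4 * ‖T‖)
  have hβ₀ : 0 < β := div_pos hδ (by linarith)
  have hβ₁ : β < 1 := by rw [div_lt_one (by linarith)]; linarith
  have hβT : β * ‖T‖ = δ / 4 := by
    rw [div_mul_eq_mul_div, mul_div_mul_right _ _ hT₀.ne']
  refine ⟨fun n => β ^ n • T (y n), fun n => δ / 8 * β ^ n, fun n => β ^ n • y n, δ / 8,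
    fun n => by positivity, ?_, pairwise_add_le_dist_pow_smul hzlow hzM hβ₀ hβ₁.le (by positivity)
      (by linarith), fun w => eventually_forall_le_dist_smul ?_ fun n => ?_,
    fun n => map_smul T _ _, by positivity, fun n => ?_⟩
  · simpa using (tendsto_pow_atTop_nhds_zero_of_lt_one hβ₀.le hβ₁).const_mul (δ / 8)
  · exact finite_setOf_exists_dist_smul_lt hzsep hzM (by linarith) (fun n => pow_pos hβ₀ n) w
  · rw [norm_smul, norm_pow, Real.norm_of_nonneg hβ₀.le]
    nlinarith [hzlow n, pow_pos hβ₀ n]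
  · simp only [norm_smul, norm_pow, Real.norm_of_nonneg hβ₀.le]
    exact mul_le_mul_of_nonneg_left (mul_le_of_le_one_right (by positivity) (hy₁ n))
      (by positivity)

theorem lineability_of_bad_lipschitz_functions_general
    {X Y : Type*} [NormedAddCommGroup X] [NormedSpace ℝ X] [CompleteSpace X]
    [NormedAddCommGroup Y] [NormedSpace ℝ Y]
    (T : Y →L[ℝ] X) (hT : ¬ IsCompact (closure (⇑T '' closedBall 0 1))) :
    ∃ L : lp (fun _ : ℕ => ℝ) (⊤ : ENNReal) →ₗ[ℝ] (X → ℝ),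
      Function.Injective L ∧
      ∀ μ : lp (fun _ : ℕ => ℝ) (⊤ : ENNReal),
        L μ 0 = 0 ∧
        LipschitzWith ‖μ‖₊ (L μ) ∧
        (∀ K : NNReal, LipschitzWith K (L μ) → ‖μ‖₊ ≤ K) ∧
        GateauxDifferentiableAt (L μ) 0 ∧
        (μ ≠ 0 → ¬ DifferentiableAt ℝ (L μ ∘ T) 0) := by
  obtain ⟨p, r, y, ε, hr, hr₀, hsep, hline, hTy, hε, hy⟩ :=
    exists_balls_of_not_isCompact_image_closedBall T hT
  -- through `Nat.unpair`, every coordinate of `μ` weights infinitely many balls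
  let L : lp (fun _ : ℕ => ℝ) ∞ →ₗ[ℝ] X → ℝ :=
    { toFun μ := coneSeries p r fun n => μ n.unpair.1
      map_add' μ ν := coneSeries_add hsep _ _
      map_smul' a μ := coneSeries_smul hsep a _ }
  have hL : ∀ μ, DifferentiableAt ℝ (L μ ∘ T) 0 → μ = 0 := fun μ hμ => by
    have hc := tendsto_of_differentiableAt_coneSeries_comp hsep hr hr₀ hline T hTy hε hy hμ
    refine lp.ext <| funext fun k => ?_
    have hk : Tendsto (fun _ : ℕ => μ k) atTop (𝓝 0) := by
      simpa [Function.comp_def] using hc.comp (tendsto_atTop_mono (Nat.right_le_pair k) tendsto_id)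
    simpa using tendsto_nhds_unique tendsto_const_nhds hk
  refine ⟨L, (injective_iff_map_eq_zero L).mpr fun μ hμ => hL μ ?_, fun μ => ⟨?_, ?_, ?_, ?_, ?_⟩⟩
  · rw [hμ]
    exact differentiableAt_const 0
  · exact coneSeries_apply_zero hline _
  · exact LipschitzWith.of_dist_le_mul <| dist_coneSeries_le hsep fun n => by
      simpa using lp.norm_apply_le_norm ENNReal.top_ne_zero μ n.unpair.1
  · exact fun K hK => lp.norm_le_of_forall_le K.2 fun k => by
      simpa using abs_le_of_lipschitzWith_coneSeries hsep hr hK (Nat.pair k 0)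
  · exact gateauxDifferentiableAt_coneSeries hline _
  · exact fun hμ hd => hμ (hL μ hd)

/-- Let `T : Y → X` be a non-compact bounded linear operator between
Banach spaces. Then there is an injective linear map `L : ℓ∞(ℕ) → (X → ℝ)` such that for
every `μ ∈ ℓ∞(ℕ)`: `L μ` vanishes at `0`, `L μ` is Lipschitz with best Lipschitz constant
`‖μ‖∞`, `L μ` is Gâteaux differentiable at `0`, and if `μ ≠ 0` then `(L μ) ∘ T` is not
Fréchet differentiable at `0`. -/
theorem lineability_of_bad_lipschitz_functions
    {X Y : Type*} [NormedAddCommGroup X] [NormedSpace ℝ X] [CompleteSpace X]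
    [NormedAddCommGroup Y] [NormedSpace ℝ Y] [CompleteSpace Y]
    (T : Y →L[ℝ] X) (hT : ¬ IsCompact (closure (⇑T '' closedBall 0 1))) :
    ∃ L : lp (fun _ : ℕ => ℝ) (⊤ : ENNReal) →ₗ[ℝ] (X → ℝ),
      Function.Injective L ∧
      ∀ μ : lp (fun _ : ℕ => ℝ) (⊤ : ENNReal),
        L μ 0 = 0 ∧
        LipschitzWith ‖μ‖₊ (L μ) ∧
        (∀ K : NNReal, LipschitzWith K (L μ) → ‖μ‖₊ ≤ K) ∧
        GateauxDifferentiableAt (L μ) 0 ∧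
        (μ ≠ 0 → ¬ DifferentiableAt ℝ (L μ ∘ T) 0) :=
  lineability_of_bad_lipschitz_functions_general T hT
end

section
/- Let X and Y be Banach spaces and T : Y → X a bounded linear operator. Assume X admits a Lipschitz Gâteaux differentiable bump function b : X → ℝ (i.e., b is nonnegative, not identically zero, Lipschitz, everywhere Gâteaux differentiable, and has bounded support). Then T is compact if and only if for every bounded Lipschitz function f : X → ℝ which is Gâteaux differentiable at every point of X, the composition f ∘ T is Fréchet differentiable at every point of Y. -/
/-!
If `T` is compact, the Lipschitz bound upgrades Gâteaux differentiability of `f` at `T y` to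
convergence of the difference quotients uniformly over the compact set of directions
`closure (T '' closedBall 0 1)`, and this is Fréchet differentiability of `f ∘ T` at `y`.

If `T` is not compact, `T '' closedBall 0 1` contains an `ε`-separated sequence `x n = T (y n)`
with `‖x n‖ ≥ ε`. Copies of the bump, of height and radius proportional to `θ ^ n`, placed around
`θ ^ n • x n` lie in disjoint shells around `0` when `θ` is small, so their sum `f` is bounded,
Lipschitz, and Gâteaux differentiable away from `0` (it is locally a finite sum there). A line
through `0` passes close to only finitely many `x n`, since they are separated and bounded, so
`f` vanishes near `0` on every line and has Gâteaux derivative `0` at `0`. Yet at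
`θ ^ n • x n = T (θ ^ n • y n)` the value of `f` is `θ ^ n` times the height of the bump, while
`‖θ ^ n • y n‖ ≤ θ ^ n`, so `f ∘ T` is not Fréchet differentiable at `0`.
-/

open Filter Metric Topology

open Set Function

section Gateaux

variable {X Y Z : Type*} [NormedAddCommGroup X] [NormedSpace ℝ X] [NormedAddCommGroup Y]
  [NormedSpace ℝ Y] [NormedAddCommGroup Z] [NormedSpace ℝ Z] {f : X → Z} {A : X →L[ℝ] Z} {x : X}

theorem hasGateauxDerivAt_iff_hasLineDerivAt :
    HasGateauxDerivAt f A x ↔ ∀ v, HasLineDerivAt ℝ f (A v) x v :=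
  forall_congr' fun _ => hasLineDerivAt_iff_tendsto_slope_zero.symm

theorem HasGateauxDerivAt.comp_affine {g : Y → X} {L : Y →L[ℝ] X} {y : Y}
    (hf : HasGateauxDerivAt f A (g y)) (hg : ∀ v (s : ℝ), g (y + s • v) = g y + s • L v) :
    HasGateauxDerivAt (fun v => f (g v)) (A.comp L) y :=
  hasGateauxDerivAt_iff_hasLineDerivAt.2 fun v => by
    simpa only [HasLineDerivAt, hg, ContinuousLinearMap.comp_apply] using
      hasGateauxDerivAt_iff_hasLineDerivAt.1 hf (L v)

theorem HasGateauxDerivAt.const_smul (c : ℝ) (hf : HasGateauxDerivAt f A x) :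
    HasGateauxDerivAt (fun z => c • f z) (c • A) x :=
  hasGateauxDerivAt_iff_hasLineDerivAt.2 fun v =>
    (hasGateauxDerivAt_iff_hasLineDerivAt.1 hf v).const_smul c

theorem HasGateauxDerivAt.sum {ι : Type*} {s : Finset ι} {F : ι → X → Z} {A : ι → X →L[ℝ] Z}
    (h : ∀ i ∈ s, HasGateauxDerivAt (F i) (A i) x) :
    HasGateauxDerivAt (fun z => ∑ i ∈ s, F i z) (∑ i ∈ s, A i) x :=
  hasGateauxDerivAt_iff_hasLineDerivAt.2 fun v => by
    simpa only [HasLineDerivAt, FunLike.coe_sum, Finset.sum_apply] using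
      HasDerivAt.fun_sum fun i hi => hasGateauxDerivAt_iff_hasLineDerivAt.1 (h i hi) v

theorem HasGateauxDerivAt.congr_of_eventuallyEq {g : X → Z} (hf : HasGateauxDerivAt f A x)
    (hg : g =ᶠ[𝓝 x] f) : HasGateauxDerivAt g A x :=
  hasGateauxDerivAt_iff_hasLineDerivAt.2 fun v =>
    (hasGateauxDerivAt_iff_hasLineDerivAt.1 hf v).congr_of_eventuallyEq hg

theorem hasLineDerivAt_zero_of_eventually_eq {v : X}
    (h : ∀ᶠ s in 𝓝 (0 : ℝ), f (x + s • v) = f x) : HasLineDerivAt ℝ f 0 x v :=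
  (hasDerivAt_const (0 : ℝ) (f x)).congr_of_eventuallyEq h

end Gateaux

section Hadamard

variable {X Y Z : Type*} [NormedAddCommGroup X] [NormedSpace ℝ X] [NormedAddCommGroup Y]
  [NormedSpace ℝ Y] [NormedAddCommGroup Z] [NormedSpace ℝ Z] {f : X → Z} {A : X →L[ℝ] Z}
  {C : NNReal}

theorem LipschitzWith.eventually_forall_norm_sub_sub_le (hf : LipschitzWith C f) {x : X}
    (hA : HasGateauxDerivAt f A x) {K : Set X} (hK : IsCompact K) {ε : ℝ} (hε : 0 < ε) :
    ∀ᶠ t in 𝓝 (0 : ℝ), ∀ v ∈ K, ‖f (x + t • v) - f x - t • A v‖ ≤ ε * ‖t‖ := by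
  obtain ⟨η, hη, hηε⟩ : ∃ η, 0 < η ∧ (C + ‖A‖ + 1) * η = ε :=
    ⟨ε / (C + ‖A‖ + 1), by positivity, mul_div_cancel₀ ε (by positivity)⟩
  obtain ⟨q, -, hq, hKq⟩ := hK.finite_cover_balls hη
  have hnet : ∀ᶠ t in 𝓝 (0 : ℝ), ∀ w ∈ q, ‖f (x + t • w) - f x - t • A w‖ ≤ η * ‖t‖ :=
    hq.eventually_all.2 fun w _ => (hasLineDerivAt_iff_isLittleO_nhds_zero.1
      (hasGateauxDerivAt_iff_hasLineDerivAt.1 hA w)).def hη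
  filter_upwards [hnet] with t ht v hv
  obtain ⟨w, hwq, hvw⟩ := mem_iUnion₂.1 (hKq hv)
  rw [mem_ball, dist_eq_norm] at hvw
  calc ‖f (x + t • v) - f x - t • A v‖
      = ‖(f (x + t • v) - f (x + t • w)) + t • A (w - v) + (f (x + t • w) - f x - t • A w)‖ := by
        rw [map_sub, smul_sub]; congr 1; abel
    _ ≤ ‖f (x + t • v) - f (x + t • w)‖ + ‖t • A (w - v)‖
          + ‖f (x + t • w) - f x - t • A w‖ := norm_add₃_le
    _ ≤ C * (‖t‖ * η) + ‖t‖ * (‖A‖ * η) + η * ‖t‖ := by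
        gcongr
        · refine (hf.norm_sub_le _ _).trans ?_
          rw [add_sub_add_left_eq_sub, ← smul_sub, norm_smul]
          gcongr
        · rw [norm_smul]
          gcongr
          exact A.le_opNorm_of_le (by rw [norm_sub_rev]; exact hvw.le)
        · exact ht w hwq
    _ = ε * ‖t‖ := by rw [← hηε]; ring

theorem LipschitzWith.hasFDerivAt_comp_of_isCompact (hf : LipschitzWith C f) {T : Y →L[ℝ] X}
    {y : Y} (hA : HasGateauxDerivAt f A (T y))
    (hT : IsCompact (closure (T '' closedBall 0 1))) : HasFDerivAt (f ∘ T) (A.comp T) y := by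
  rw [hasFDerivAt_iff_isLittleO_nhds_zero, Asymptotics.isLittleO_iff]
  intro ε hε
  obtain ⟨r, hr, hball⟩ := Metric.eventually_nhds_iff.1
    (hf.eventually_forall_norm_sub_sub_le hA hT hε)
  filter_upwards [ball_mem_nhds (0 : Y) hr] with k hk
  rcases eq_or_ne k 0 with rfl | hk0
  · simp
  have hk0' : ‖k‖ ≠ 0 := norm_ne_zero_iff.2 hk0
  set u := ‖k‖⁻¹ • k
  have hu : T u ∈ closure (T '' closedBall 0 1) :=
    subset_closure (mem_image_of_mem T (by simp [u, norm_smul, hk0']))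
  have hTk : T k = ‖k‖ • T u := by rw [map_smul, smul_inv_smul₀ hk0']
  calc ‖(f ∘ T) (y + k) - (f ∘ T) y - (A.comp T) k‖
      = ‖f (T y + ‖k‖ • T u) - f (T y) - ‖k‖ • A (T u)‖ := by
        rw [comp_apply, comp_apply, ContinuousLinearMap.comp_apply, map_add, ← map_smul A, ← hTk]
    _ ≤ ε * ‖(‖k‖)‖ := hball (by simpa using hk) _ hu
    _ = ε * ‖k‖ := by rw [norm_norm]

end Hadamard

section Separated

variable {α : Type*} [PseudoMetricSpace α]

theorem exists_seq_separated_of_not_totallyBounded {s : Set α} (hs : ¬TotallyBounded s) (a : α) :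
    ∃ ε > 0, ∃ x : ℕ → α, (∀ n, x n ∈ s) ∧ (∀ n, ε ≤ dist (x n) a) ∧
      Pairwise fun m n => ε ≤ dist (x m) (x n) := by
  rw [Metric.totallyBounded_iff] at hs
  push Not at hs
  obtain ⟨ε, hε, hcover⟩ := hs
  have hfar : ∀ t : Set α, t.Finite → ∃ z, z ∈ s ∧ ∀ w ∈ insert a t, ε ≤ dist z w := by
    intro t ht
    obtain ⟨z, hzs, hz⟩ := not_subset.1 (hcover _ (ht.insert a))
    simp only [mem_iUnion₂, mem_ball, not_exists, not_lt] at hz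
    exact ⟨z, hzs, hz⟩
  obtain ⟨x, hx⟩ := seq_of_forall_finite_exists hfar
  refine ⟨ε, hε, x, fun n => (hx n).1, fun n => (hx n).2 a (mem_insert a _), fun m n hmn => ?_⟩
  rcases hmn.lt_or_gt with h | h
  · rw [dist_comm]
    exact (hx n).2 _ (mem_insert_of_mem _ (mem_image_of_mem x h))
  · exact (hx m).2 _ (mem_insert_of_mem _ (mem_image_of_mem x h))

theorem finite_setOf_exists_dist_le_of_isCompact {K : Set α} (hK : IsCompact K) {x : ℕ → α}
    {ε δ : ℝ} (hx : Pairwise fun m n => ε ≤ dist (x m) (x n)) (hδ : 2 * δ < ε) :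
    {n | ∃ k ∈ K, dist (x n) k ≤ δ}.Finite := by
  obtain ⟨q, -, hq, hKq⟩ := hK.finite_cover_balls (e := (ε - 2 * δ) / 2) (by linarith)
  refine (hq.biUnion fun c _ =>
    Set.Subsingleton.finite (s := {n | dist (x n) c < ε / 2}) ?_).subset ?_
  · intro m hm n hn
    by_contra hmn
    have hsep : ε ≤ dist (x m) (x n) := hx hmn
    have hm : dist (x m) c < ε / 2 := hm
    have hn : dist (x n) c < ε / 2 := hn
    linarith [dist_triangle_right (x m) (x n) c]
  · rintro n ⟨k, hkK, hk⟩
    obtain ⟨c, hcq, hkc⟩ := mem_iUnion₂.1 (hKq hkK)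
    exact mem_biUnion hcq (show dist (x n) c < ε / 2 by
      linarith [dist_triangle (x n) k c, mem_ball.1 hkc])

end Separated

section DisjointSupport

variable {ι α : Type*} {g : ι → α → ℝ}

theorem tsum_eq_of_pairwise_disjoint_support (hg : Pairwise (Disjoint on fun i => support (g i)))
    {i : ι} {a : α} (ha : g i a ≠ 0) : ∑' j, g j a = g i a :=
  tsum_eq_single i fun _ hj => by_contra fun hja => Set.disjoint_left.1 (hg hj) hja ha

theorem le_tsum_of_pairwise_disjoint_support (hg : Pairwise (Disjoint on fun i => support (g i)))
    (hg0 : ∀ i a, 0 ≤ g i a) (i : ι) (a : α) : g i a ≤ ∑' j, g j a := by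
  by_cases ha : g i a = 0
  · rw [ha]
    exact tsum_nonneg fun j => hg0 j a
  · rw [tsum_eq_of_pairwise_disjoint_support hg ha]

theorem exists_tsum_eq_of_pairwise_disjoint_support [Nonempty ι]
    (hg : Pairwise (Disjoint on fun i => support (g i))) (a : α) : ∃ i, ∑' j, g j a = g i a := by
  by_cases ha : ∃ i, g i a ≠ 0
  · obtain ⟨i, hi⟩ := ha
    exact ⟨i, tsum_eq_of_pairwise_disjoint_support hg hi⟩
  · push Not at ha
    exact ⟨Classical.arbitrary ι, by simp [ha]⟩

theorem LipschitzWith.tsum_of_pairwise_disjoint_support [Nonempty ι] [PseudoMetricSpace α]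
    {K : NNReal} (hg : Pairwise (Disjoint on fun i => support (g i))) (hg0 : ∀ i a, 0 ≤ g i a)
    (hK : ∀ i, LipschitzWith K (g i)) : LipschitzWith K fun a => ∑' i, g i a := by
  refine LipschitzWith.of_le_add_mul K fun a b => ?_
  obtain ⟨i, hi⟩ := exists_tsum_eq_of_pairwise_disjoint_support hg a
  rw [hi]
  exact ((hK i).le_add_mul a b).trans
    (add_le_add_left (le_tsum_of_pairwise_disjoint_support hg hg0 i b) _)

theorem tsum_le_of_pairwise_disjoint_support [Nonempty ι]
    (hg : Pairwise (Disjoint on fun i => support (g i))) {C : ℝ} (hC : ∀ i a, g i a ≤ C)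
    (a : α) : ∑' i, g i a ≤ C := by
  obtain ⟨i, hi⟩ := exists_tsum_eq_of_pairwise_disjoint_support hg a
  exact hi ▸ hC i a

end DisjointSupport

section LineRestrictions

variable {X Y : Type*} [NormedAddCommGroup X] [NormedSpace ℝ X] [NormedAddCommGroup Y]
  [NormedSpace ℝ Y]

theorem smul_mem_image_smul_closedBall (h : X) {a r : ℝ} (ha : ‖a • h‖ ≤ r) :
    a • h ∈ (· • h) '' closedBall (0 : ℝ) (r / ‖h‖) := by
  rcases eq_or_ne h 0 with rfl | hh
  · exact ⟨0, by simp, by simp⟩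
  · refine ⟨a, ?_, rfl⟩
    rwa [mem_closedBall, dist_zero_right, le_div_iff₀ (norm_pos_iff.2 hh), ← norm_smul]

theorem not_differentiableAt_zero_of_eventually_smul_eq_zero {g : Y → ℝ}
    (hline : ∀ k, ∀ᶠ s in 𝓝 (0 : ℝ), g (s • k) = 0) {c : ℝ} (hc : 0 < c) {k : ℕ → Y}
    (hk : Tendsto k atTop (𝓝 0)) (hk0 : ∀ n, k n ≠ 0) (hgk : ∀ n, c * ‖k n‖ ≤ g (k n)) :
    ¬DifferentiableAt ℝ g 0 := by
  intro hg
  have hg0 : g 0 = 0 := by simpa using (hline 0).self_of_nhds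
  have hD : fderiv ℝ g 0 = 0 := ContinuousLinearMap.ext fun v =>
    (hg.hasFDerivAt.hasLineDerivAt v).unique
      (hasLineDerivAt_zero_of_eventually_eq (by simpa [hg0] using hline v))
  have hsmall := (hasFDerivAt_iff_isLittleO_nhds_zero.1 (hD ▸ hg.hasFDerivAt)).def (half_pos hc)
  obtain ⟨n, hn⟩ := (hk.eventually hsmall).exists
  have hkn := norm_pos_iff.2 (hk0 n)
  simp only [zero_add, hg0, sub_zero, zero_apply, Real.norm_eq_abs] at hn
  linarith [hgk n, le_abs_self (g (k n)), mul_pos hc hkn]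

end LineRestrictions

section UnitBump

variable {X : Type*} [NormedAddCommGroup X] [NormedSpace ℝ X]

structure IsUnitBump (φ : X → ℝ) : Prop where
  nonneg : ∀ v, 0 ≤ φ v
  pos : 0 < φ 0
  norm_le_one : ∀ v, φ v ≠ 0 → ‖v‖ ≤ 1
  lipschitz : ∃ K, LipschitzWith K φ
  gateaux : ∀ v, GateauxDifferentiableAt φ v

theorem exists_isUnitBump {b : X → ℝ} (hb_nonneg : ∀ x, 0 ≤ b x) (hb_ne : b ≠ 0)
    (hb_lip : ∃ K, LipschitzWith K b) (hb_gateaux : ∀ x, GateauxDifferentiableAt b x)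
    (hb_supp : Bornology.IsBounded (tsupport b)) : ∃ φ : X → ℝ, IsUnitBump φ := by
  obtain ⟨x₀, hx₀⟩ := Function.ne_iff.1 hb_ne
  obtain ⟨R, hR⟩ := hb_supp.subset_ball x₀
  have hR0 : 0 < R := pos_of_mem_ball (hR (subset_tsupport b hx₀))
  obtain ⟨K, hK⟩ := hb_lip
  refine ⟨fun v => b (R • v + x₀), fun v => hb_nonneg _, ?_, fun v hv => ?_,
    ⟨_, hK.comp ((lipschitzWith_smul R).add (LipschitzWith.const x₀))⟩, fun v => ?_⟩
  · simpa using (hb_nonneg x₀).lt_of_ne' hx₀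
  · have hv := hR (subset_tsupport b hv)
    rw [mem_ball, dist_eq_norm, add_sub_cancel_right, norm_smul, Real.norm_eq_abs,
      abs_of_pos hR0] at hv
    nlinarith
  · obtain ⟨A, hA⟩ := hb_gateaux (R • v + x₀)
    exact ⟨_, hA.comp_affine (g := fun w => R • w + x₀) (L := R • ContinuousLinearMap.id ℝ X)
      fun w s => by simp; module⟩

theorem IsUnitBump.le_add {φ : X → ℝ} (hφ : IsUnitBump φ) {K : NNReal} (hK : LipschitzWith K φ)
    (v : X) : φ v ≤ φ 0 + K := by
  by_cases hv : φ v = 0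
  · linarith [hφ.pos, K.coe_nonneg]
  · calc φ v ≤ φ 0 + K * dist v 0 := hK.le_add_mul v 0
      _ ≤ φ 0 + K * 1 := by gcongr; simpa using hφ.norm_le_one v hv
      _ = φ 0 + K := by ring

end UnitBump

section ScaledBump

variable {X : Type*} [NormedAddCommGroup X] [NormedSpace ℝ X] {φ : X → ℝ} {t δ : ℝ} {x z : X}

/-- `φ` moved onto `closedBall (t • x) (t * δ)` with its height multiplied by `t`, so that its
Lipschitz constant `K / δ` does not depend on `t`. -/
noncomputable def scaledBump (φ : X → ℝ) (t δ : ℝ) (x z : X) : ℝ := t * φ (δ⁻¹ • (t⁻¹ • z - x))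

theorem scaledBump_nonneg (hφ : IsUnitBump φ) (ht : 0 ≤ t) : 0 ≤ scaledBump φ t δ x z :=
  mul_nonneg ht (hφ.nonneg _)

theorem scaledBump_le (hφ : IsUnitBump φ) {K : NNReal} (hK : LipschitzWith K φ) (ht : t ≤ 1) :
    scaledBump φ t δ x z ≤ φ 0 + K :=
  (mul_le_of_le_one_left (hφ.nonneg _) ht).trans (hφ.le_add hK _)

theorem scaledBump_smul_self (ht : t ≠ 0) : scaledBump φ t δ x (t • x) = t * φ 0 := by
  simp [scaledBump, inv_smul_smul₀ ht]

theorem norm_inv_smul_sub_le_of_scaledBump_ne_zero (hφ : IsUnitBump φ) (hδ : 0 < δ)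
    (h : scaledBump φ t δ x z ≠ 0) : ‖t⁻¹ • z - x‖ ≤ δ := by
  have := hφ.norm_le_one _ (right_ne_zero_of_mul h)
  rwa [norm_smul, norm_inv, Real.norm_eq_abs, abs_of_pos hδ, inv_mul_le_iff₀ hδ, mul_one] at this

theorem norm_mem_Icc_of_scaledBump_ne_zero (hφ : IsUnitBump φ) (ht : 0 < t) (hδ : 0 < δ)
    (h : scaledBump φ t δ x z ≠ 0) : t * (‖x‖ - δ) ≤ ‖z‖ ∧ ‖z‖ ≤ t * (‖x‖ + δ) := by
  have hz : ‖z‖ = t * ‖t⁻¹ • z‖ := by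
    rw [norm_smul, norm_inv, Real.norm_eq_abs, abs_of_pos ht, mul_inv_cancel_left₀ ht.ne']
  have hclose := abs_le.1 ((abs_norm_sub_norm_le _ _).trans
    (norm_inv_smul_sub_le_of_scaledBump_ne_zero hφ hδ h))
  rw [hz]
  constructor <;> gcongr <;> linarith [hclose.1, hclose.2]

theorem lipschitzWith_scaledBump {K : NNReal} (hK : LipschitzWith K φ) (ht : 0 < t) (hδ : 0 < δ) :
    LipschitzWith (K / δ.toNNReal) (scaledBump φ t δ x) := by
  refine LipschitzWith.of_dist_le_mul fun z w => ?_
  have hzw : δ⁻¹ • (t⁻¹ • z - x) - δ⁻¹ • (t⁻¹ • w - x) = (δ⁻¹ * t⁻¹) • (z - w) := by module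
  rw [NNReal.coe_div, Real.coe_toNNReal _ hδ.le, dist_eq_norm, dist_eq_norm]
  calc ‖scaledBump φ t δ x z - scaledBump φ t δ x w‖
      = t * ‖φ (δ⁻¹ • (t⁻¹ • z - x)) - φ (δ⁻¹ • (t⁻¹ • w - x))‖ := by
        rw [scaledBump, scaledBump, ← mul_sub, norm_mul, Real.norm_of_nonneg ht.le]
    _ ≤ t * (K * ‖(δ⁻¹ * t⁻¹) • (z - w)‖) := by
        rw [← hzw]; gcongr; exact hK.norm_sub_le _ _
    _ = K / δ * ‖z - w‖ := by
        rw [norm_smul, Real.norm_of_nonneg (by positivity)]; field_simp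

theorem gateauxDifferentiableAt_scaledBump (hφ : IsUnitBump φ) :
    GateauxDifferentiableAt (scaledBump φ t δ x) z := by
  obtain ⟨A, hA⟩ := hφ.gateaux (δ⁻¹ • (t⁻¹ • z - x))
  exact ⟨_, (hA.comp_affine (g := fun w => δ⁻¹ • (t⁻¹ • w - x))
    (L := (δ⁻¹ * t⁻¹) • ContinuousLinearMap.id ℝ X) fun v s => by simp; module).const_smul t⟩

end ScaledBump

section BumpSeries

variable {X : Type*} [NormedAddCommGroup X] [NormedSpace ℝ X] {φ : X → ℝ} {θ δ ε M : ℝ}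
  {x : ℕ → X}

noncomputable def bumpSeries (φ : X → ℝ) (θ δ : ℝ) (x : ℕ → X) (z : X) : ℝ :=
  ∑' n, scaledBump φ (θ ^ n) δ (x n) z

theorem pairwise_disjoint_support_scaledBump (hφ : IsUnitBump φ) (hθ0 : 0 < θ) (hθ1 : θ ≤ 1)
    (hδ : 0 < δ) (hx_lo : ∀ n, ε ≤ ‖x n‖) (hx_hi : ∀ n, ‖x n‖ ≤ M)
    (hgap : θ * (M + δ) < ε - δ) :
    Pairwise (Disjoint on fun n => support (scaledBump φ (θ ^ n) δ (x n))) := by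
  refine (pairwise_disjoint_on _).2 fun m n hmn => Set.disjoint_left.2 fun z hm hn => ?_
  have hlo := (norm_mem_Icc_of_scaledBump_ne_zero hφ (pow_pos hθ0 m) hδ hm).1
  have hhi := (norm_mem_Icc_of_scaledBump_ne_zero hφ (pow_pos hθ0 n) hδ hn).2
  have hθn : θ ^ n ≤ θ ^ (m + 1) := pow_le_pow_of_le_one hθ0.le hθ1 hmn
  have := pow_pos hθ0 m
  refine lt_irrefl ‖z‖ ?_
  calc ‖z‖ ≤ θ ^ n * (‖x n‖ + δ) := hhi
    _ ≤ θ ^ (m + 1) * (M + δ) := by gcongr; exact hx_hi n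
    _ = θ ^ m * (θ * (M + δ)) := by ring
    _ < θ ^ m * (ε - δ) := by gcongr
    _ ≤ θ ^ m * (‖x m‖ - δ) := by gcongr; exact hx_lo m
    _ ≤ ‖z‖ := hlo

theorem bumpSeries_eventually_smul_eq_zero (hφ : IsUnitBump φ) (hθ0 : 0 < θ) (hδ : 0 < δ)
    (hδε : 2 * δ < ε) (hx_lo : ∀ n, ε ≤ ‖x n‖) (hx_hi : ∀ n, ‖x n‖ ≤ M)
    (hsep : Pairwise fun m n => ε ≤ dist (x m) (x n)) (h : X) :
    ∀ᶠ s in 𝓝 (0 : ℝ), bumpSeries φ θ δ x (s • h) = 0 := by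
  set K := (· • h) '' closedBall (0 : ℝ) ((M + δ) / ‖h‖)
  have hK : IsCompact K := (isCompact_closedBall _ _).image (continuous_id.smul continuous_const)
  have hS := finite_setOf_exists_dist_le_of_isCompact hK hsep hδε
  have hsmall : ∀ᶠ s in 𝓝 (0 : ℝ), ∀ n ∈ {n | ∃ k ∈ K, dist (x n) k ≤ δ},
      ‖s • h‖ < θ ^ n * (ε - δ) :=
    hS.eventually_all.2 fun n _ =>
      (continuous_id.smul continuous_const).norm.continuousAt.eventually_lt continuousAt_const <| by
        have := pow_pos hθ0 n
        show ‖(0 : ℝ) • h‖ < _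
        rw [zero_smul, norm_zero]
        nlinarith
  filter_upwards [hsmall] with s hs
  suffices ∀ n, scaledBump φ (θ ^ n) δ (x n) (s • h) = 0 by simp [bumpSeries, this]
  intro n
  by_contra hne
  have hnear := norm_inv_smul_sub_le_of_scaledBump_ne_zero hφ hδ hne
  rw [smul_smul] at hnear
  have hmem : n ∈ {n | ∃ k ∈ K, dist (x n) k ≤ δ} := by
    refine ⟨_, smul_mem_image_smul_closedBall h ?_, by rwa [dist_eq_norm, norm_sub_rev]⟩
    linarith [norm_le_norm_add_norm_sub' (((θ ^ n)⁻¹ * s) • h) (x n), hx_hi n]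
  have hlo := (norm_mem_Icc_of_scaledBump_ne_zero hφ (pow_pos hθ0 n) hδ hne).1
  have : θ ^ n * (ε - δ) ≤ θ ^ n * (‖x n‖ - δ) := by
    gcongr; exact hx_lo n
  linarith [hs n hmem]

theorem bumpSeries_eventuallyEq_sum (hφ : IsUnitBump φ) (hθ0 : 0 < θ) (hθ1 : θ < 1)
    (hδ : 0 < δ) (hx_hi : ∀ n, ‖x n‖ ≤ M) {z : X} (hz : z ≠ 0) :
    ∃ N, bumpSeries φ θ δ x =ᶠ[𝓝 z]
      fun w => ∑ n ∈ Finset.range N, scaledBump φ (θ ^ n) δ (x n) w := by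
  have hMδ : 0 < M + δ := by linarith [hx_hi 0, norm_nonneg (x 0)]
  obtain ⟨N, hN⟩ := exists_pow_lt_of_lt_one (div_pos (norm_pos_iff.2 hz) hMδ) hθ1
  rw [lt_div_iff₀ hMδ] at hN
  refine ⟨N, ?_⟩
  filter_upwards [(continuous_norm.tendsto z).eventually (lt_mem_nhds hN)] with w hw
  refine tsum_eq_sum fun n hn => by_contra fun hne => ?_
  rw [Finset.mem_range, not_lt] at hn
  have hθn : θ ^ n ≤ θ ^ N := pow_le_pow_of_le_one hθ0.le hθ1.le hn
  have := (norm_mem_Icc_of_scaledBump_ne_zero hφ (pow_pos hθ0 n) hδ hne).2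
  have : θ ^ n * (‖x n‖ + δ) ≤ θ ^ N * (M + δ) := by
    gcongr; exact hx_hi n
  linarith

theorem gateauxDifferentiableAt_bumpSeries (hφ : IsUnitBump φ) (hθ0 : 0 < θ) (hθ1 : θ < 1)
    (hδ : 0 < δ) (hδε : 2 * δ < ε) (hx_lo : ∀ n, ε ≤ ‖x n‖) (hx_hi : ∀ n, ‖x n‖ ≤ M)
    (hsep : Pairwise fun m n => ε ≤ dist (x m) (x n)) (z : X) :
    GateauxDifferentiableAt (bumpSeries φ θ δ x) z := by
  rcases eq_or_ne z 0 with rfl | hz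
  · have hvan := bumpSeries_eventually_smul_eq_zero hφ hθ0 hδ hδε hx_lo hx_hi hsep
    have h0 : bumpSeries φ θ δ x 0 = 0 := by simpa using (hvan 0).self_of_nhds
    refine ⟨0, hasGateauxDerivAt_iff_hasLineDerivAt.2 fun h => ?_⟩
    exact hasLineDerivAt_zero_of_eventually_eq (by simpa [h0] using hvan h)
  · obtain ⟨N, hN⟩ := bumpSeries_eventuallyEq_sum hφ hθ0 hθ1 hδ hx_hi hz
    choose A hA using fun n =>
      gateauxDifferentiableAt_scaledBump hφ (t := θ ^ n) (δ := δ) (x := x n) (z := z)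
    exact ⟨_, (HasGateauxDerivAt.sum fun n _ => hA n).congr_of_eventuallyEq hN⟩

theorem abs_bumpSeries_le (hφ : IsUnitBump φ) {K : NNReal} (hK : LipschitzWith K φ)
    (hθ0 : 0 < θ) (hθ1 : θ ≤ 1)
    (hdisj : Pairwise (Disjoint on fun n => support (scaledBump φ (θ ^ n) δ (x n)))) (z : X) :
    |bumpSeries φ θ δ x z| ≤ φ 0 + K := by
  rw [bumpSeries, abs_of_nonneg (tsum_nonneg fun n => scaledBump_nonneg hφ (pow_pos hθ0 n).le)]
  exact tsum_le_of_pairwise_disjoint_support hdisj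
    (fun n _ => scaledBump_le hφ hK (pow_le_one₀ hθ0.le hθ1)) z

theorem lipschitzWith_bumpSeries (hφ : IsUnitBump φ) {K : NNReal} (hK : LipschitzWith K φ)
    (hθ0 : 0 < θ) (hδ : 0 < δ)
    (hdisj : Pairwise (Disjoint on fun n => support (scaledBump φ (θ ^ n) δ (x n)))) :
    LipschitzWith (K / δ.toNNReal) (bumpSeries φ θ δ x) :=
  LipschitzWith.tsum_of_pairwise_disjoint_support hdisj
    (fun n _ => scaledBump_nonneg hφ (pow_pos hθ0 n).le)
    fun n => lipschitzWith_scaledBump hK (pow_pos hθ0 n) hδ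

theorem le_bumpSeries_pow_smul (hφ : IsUnitBump φ) (hθ0 : 0 < θ)
    (hdisj : Pairwise (Disjoint on fun n => support (scaledBump φ (θ ^ n) δ (x n)))) (n : ℕ) :
    θ ^ n * φ 0 ≤ bumpSeries φ θ δ x (θ ^ n • x n) :=
  (scaledBump_smul_self (pow_ne_zero n hθ0.ne')).symm.trans_le <|
    le_tsum_of_pairwise_disjoint_support hdisj
      (fun n _ => scaledBump_nonneg hφ (pow_pos hθ0 n).le) n _

end BumpSeries

section Converse

variable {X Y : Type*} [NormedAddCommGroup X] [NormedSpace ℝ X] [NormedAddCommGroup Y]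
  [NormedSpace ℝ Y]

theorem not_differentiableAt_bumpSeries_comp {φ : X → ℝ} (hφ : IsUnitBump φ) {θ δ : ℝ}
    (hθ0 : 0 < θ) (hθ1 : θ < 1) {T : Y →L[ℝ] X} {y : ℕ → Y} (hy : ∀ n, ‖y n‖ ≤ 1)
    (hTy : ∀ n, T (y n) ≠ 0)
    (hdisj : Pairwise (Disjoint on fun n => support (scaledBump φ (θ ^ n) δ (T (y n)))))
    (hvan : ∀ h, ∀ᶠ s in 𝓝 (0 : ℝ), bumpSeries φ θ δ (fun n => T (y n)) (s • h) = 0) :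
    ¬DifferentiableAt ℝ (bumpSeries φ θ δ (fun n => T (y n)) ∘ T) 0 := by
  have hy_small : ∀ n, ‖θ ^ n • y n‖ ≤ θ ^ n := fun n => by
    rw [norm_smul, norm_pow, Real.norm_of_nonneg hθ0.le]
    exact mul_le_of_le_one_right (by positivity) (hy n)
  refine not_differentiableAt_zero_of_eventually_smul_eq_zero (k := fun n => θ ^ n • y n)
    (fun k => by simpa using hvan (T k)) hφ.pos
    (squeeze_zero_norm hy_small (tendsto_pow_atTop_nhds_zero_of_lt_one hθ0.le hθ1))
    (fun n h => hTy n ?_) (fun n => ?_)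
  · simpa [pow_ne_zero n hθ0.ne'] using congrArg T h
  · calc φ 0 * ‖θ ^ n • y n‖ ≤ θ ^ n * φ 0 := by
          rw [mul_comm]; exact mul_le_mul_of_nonneg_right (hy_small n) hφ.pos.le
      _ ≤ bumpSeries φ θ δ (fun n => T (y n)) (θ ^ n • T (y n)) :=
          le_bumpSeries_pow_smul hφ hθ0 hdisj n
      _ = (bumpSeries φ θ δ (fun n => T (y n)) ∘ T) (θ ^ n • y n) := by simp

theorem exists_not_differentiableAt_comp_of_not_isCompact [CompleteSpace X] {φ : X → ℝ}
    (hφ : IsUnitBump φ) (T : Y →L[ℝ] X) (hT : ¬IsCompact (closure (T '' closedBall 0 1))) :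
    ∃ f : X → ℝ, (∃ C, ∀ x, |f x| ≤ C) ∧ (∃ K : NNReal, LipschitzWith K f) ∧
      (∀ x, GateauxDifferentiableAt f x) ∧ ¬DifferentiableAt ℝ (f ∘ T) 0 := by
  obtain ⟨ε, hε, x, hxT, hx_lo, hsep⟩ := exists_seq_separated_of_not_totallyBounded
    (fun h => hT (h.closure.isCompact_of_isClosed isClosed_closure)) (0 : X)
  choose y hy hyx using hxT
  obtain rfl : x = fun n => T (y n) := funext fun n => (hyx n).symm
  simp only [dist_zero_right] at hx_lo
  have hx_hi : ∀ n, ‖T (y n)‖ ≤ ‖T‖ := fun n =>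
    (T.le_opNorm_of_le (mem_closedBall_zero_iff.1 (hy n))).trans_eq (mul_one _)
  set δ := ε / 4 with hδ_def
  -- small enough that the shells `θ ^ n * (ε - δ) ≤ ‖z‖ ≤ θ ^ n * (‖T‖ + δ)` are disjoint
  set θ := ε / (4 * (‖T‖ + ε))
  have hδ : 0 < δ := by positivity
  have hθ0 : 0 < θ := by positivity
  have hθ1 : θ < 1 := by rw [div_lt_one (by positivity)]; linarith [norm_nonneg T]
  have hgap : θ * (‖T‖ + δ) < ε - δ := by
    rw [hδ_def, div_mul_eq_mul_div, div_lt_iff₀ (by positivity)]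
    nlinarith [mul_nonneg hε.le (norm_nonneg T)]
  obtain ⟨K, hK⟩ := hφ.lipschitz
  have hdisj := pairwise_disjoint_support_scaledBump hφ hθ0 hθ1.le hδ hx_lo hx_hi hgap
  refine ⟨bumpSeries φ θ δ _, ⟨_, abs_bumpSeries_le hφ hK hθ0 hθ1.le hdisj⟩,
    ⟨_, lipschitzWith_bumpSeries hφ hK hθ0 hδ hdisj⟩,
    gateauxDifferentiableAt_bumpSeries hφ hθ0 hθ1 hδ (by linarith) hx_lo hx_hi hsep,
    not_differentiableAt_bumpSeries_comp hφ hθ0 hθ1 (fun n => mem_closedBall_zero_iff.1 (hy n))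
      (fun n h => by linarith [hx_lo n, norm_eq_zero.2 h]) hdisj
      (bumpSeries_eventually_smul_eq_zero hφ hθ0 hδ (by linarith) hx_lo hx_hi hsep)⟩

end Converse

theorem compact_iff_gateaux_implies_frechet_of_bump_general
    {X Y : Type*} [NormedAddCommGroup X] [NormedSpace ℝ X] [CompleteSpace X]
    [NormedAddCommGroup Y] [NormedSpace ℝ Y]
    (T : Y →L[ℝ] X)
    (b : X → ℝ) (hb_nonneg : ∀ x, 0 ≤ b x) (hb_ne : b ≠ 0)
    (hb_lip : ∃ K : NNReal, LipschitzWith K b)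
    (hb_gateaux : ∀ x, GateauxDifferentiableAt b x)
    (hb_supp : Bornology.IsBounded (tsupport b)) :
    IsCompact (closure (⇑T '' closedBall 0 1)) ↔
      ∀ f : X → ℝ, (∃ C : ℝ, ∀ x, |f x| ≤ C) → (∃ K : NNReal, LipschitzWith K f) →
        (∀ x, GateauxDifferentiableAt f x) →
          ∀ y : Y, DifferentiableAt ℝ (f ∘ T) y := by
  refine ⟨fun hT f _ ⟨K, hf⟩ hG y => ?_, fun H => by_contra fun hT => ?_⟩
  · obtain ⟨A, hA⟩ := hG (T y)
    exact (hf.hasFDerivAt_comp_of_isCompact hA hT).differentiableAt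
  · obtain ⟨φ, hφ⟩ := exists_isUnitBump hb_nonneg hb_ne hb_lip hb_gateaux hb_supp
    obtain ⟨f, hbdd, hlip, hG, hf⟩ := exists_not_differentiableAt_comp_of_not_isCompact hφ T hT
    exact hf (H f hbdd hlip hG 0)

/-- Let `X`, `Y` be Banach spaces and `T : Y → X` a bounded linear
operator. Assume `X` admits a Lipschitz, everywhere Gâteaux differentiable bump function
(nonnegative, not identically zero, with bounded support). Then `T` is compact if and
only if for every bounded Lipschitz function `f : X → ℝ` which is Gâteaux differentiable
everywhere, `f ∘ T` is Fréchet differentiable at every point of `Y`. -/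
theorem compact_iff_gateaux_implies_frechet_of_bump
    {X Y : Type*} [NormedAddCommGroup X] [NormedSpace ℝ X] [CompleteSpace X]
    [NormedAddCommGroup Y] [NormedSpace ℝ Y] [CompleteSpace Y]
    (T : Y →L[ℝ] X)
    (b : X → ℝ) (hb_nonneg : ∀ x, 0 ≤ b x) (hb_ne : b ≠ 0)
    (hb_lip : ∃ K : NNReal, LipschitzWith K b)
    (hb_gateaux : ∀ x, GateauxDifferentiableAt b x)
    (hb_supp : Bornology.IsBounded (tsupport b)) :
    IsCompact (closure (⇑T '' closedBall 0 1)) ↔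
      ∀ f : X → ℝ, (∃ C : ℝ, ∀ x, |f x| ≤ C) → (∃ K : NNReal, LipschitzWith K f) →
        (∀ x, GateauxDifferentiableAt f x) →
          ∀ y : Y, DifferentiableAt ℝ (f ∘ T) y :=
  compact_iff_gateaux_implies_frechet_of_bump_general T b hb_nonneg hb_ne hb_lip hb_gateaux hb_supp
end

section
/- Let X be a Banach space and a, b ∈ X. Then ‖a − b‖ equals the supremum, over all bounded Lipschitz functions f : X → ℝ which are everywhere Fréchet differentiable and have strictly positive Lipschitz constant, of |f(a) − f(b)| divided by the (best) Lipschitz constant of f; and this supremum also equals the analogous supremum taken over all bounded Lipschitz everywhere Gâteaux differentiable f : X → ℝ with strictly positive Lipschitz constant. -/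
open Filter Metric Topology

/-- The best Lipschitz constant of `f`: the supremum of `|f x - f x'| / ‖x - x'‖` over
all pairs (the quotient is interpreted as `0` when `x = x'`). -/
noncomputable def bestLip {X : Type*} [NormedAddCommGroup X] (f : X → ℝ) : ℝ :=
  sSup (Set.range fun p : X × X => |f p.1 - f p.2| / ‖p.1 - p.2‖)

/-!
A norming functional `g` with `‖g‖ ≤ 1` and `g (a - b) = ‖a - b‖` separates `a` and `b` optimally;
composing it with a smooth bounded 1-Lipschitz function equal to the identity on a large interval
keeps this while making it bounded, and no ratio `|f a - f b| / bestLip f` can exceed `‖a - b‖`.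
-/

open MeasureTheory

lemma HasFDerivAt.hasGateauxDerivAt {X Z : Type*} [NormedAddCommGroup X] [NormedSpace ℝ X]
    [NormedAddCommGroup Z] [NormedSpace ℝ Z] {f : X → Z} {A : X →L[ℝ] Z} {x : X}
    (hf : HasFDerivAt f A x) : HasGateauxDerivAt f A x := fun h => by
  simpa [slope_fun_def] using hasDerivAt_iff_tendsto_slope.1 (hf.hasLineDerivAt h)

lemma Differentiable.gateauxDifferentiableAt {X Z : Type*} [NormedAddCommGroup X]
    [NormedSpace ℝ X] [NormedAddCommGroup Z] [NormedSpace ℝ Z] {f : X → Z}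
    (hf : Differentiable ℝ f) (x : X) : GateauxDifferentiableAt f x :=
  ⟨fderiv ℝ f x, (hf x).hasFDerivAt.hasGateauxDerivAt⟩

/-- A primitive of a bump function equal to `1` on `[-|M| - 1, |M| + 1]`. -/
lemma exists_bounded_differentiable_lipschitzWith_one_eqOn_id (M : ℝ) :
    ∃ φ : ℝ → ℝ, (∃ C, ∀ t, |φ t| ≤ C) ∧ LipschitzWith 1 φ ∧ Differentiable ℝ φ ∧
      ∀ t, |t| ≤ M → φ t = t := by
  let β : ContDiffBump (0 : ℝ) := ⟨|M| + 1, |M| + 2, by positivity, by linarith⟩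
  have hβ : Continuous β := β.continuous
  have hderiv (t : ℝ) : HasDerivAt (fun u => ∫ s in (0 : ℝ)..u, β s) (β t) t :=
    (hβ.integral_hasStrictDerivAt 0 t).hasDerivAt
  refine ⟨fun t => ∫ s in (0 : ℝ)..t, β s, ⟨∫ s, β s, fun t => ?_⟩, ?_,
    fun t => (hderiv t).differentiableAt, fun t ht => ?_⟩
  · rw [intervalIntegral.abs_integral_eq_abs_integral_uIoc,
      abs_of_nonneg (setIntegral_nonneg measurableSet_uIoc fun s _ => β.nonneg)]
    exact setIntegral_le_integral (hβ.integrable_of_hasCompactSupport β.hasCompactSupport)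
      (.of_forall fun s => β.nonneg)
  · refine lipschitzWith_of_nnnorm_deriv_le (fun t => (hderiv t).differentiableAt) fun t => ?_
    rw [(hderiv t).deriv, ← NNReal.coe_le_coe, coe_nnnorm, Real.norm_eq_abs,
      abs_of_nonneg β.nonneg]
    exact β.le_one
  · have hβ_one : ∀ s ∈ Set.uIcc (0 : ℝ) t, β s = 1 := fun s hs => by
      refine β.one_of_mem_closedBall ?_
      have := Set.abs_sub_left_of_mem_uIcc hs
      rw [mem_closedBall, Real.dist_eq]
      simp only [sub_zero] at this ⊢
      linarith [le_abs_self M]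
    simp [intervalIntegral.integral_congr hβ_one]

lemma exists_bounded_differentiable_lipschitzWith_one_sub_eq_norm {X : Type*}
    [NormedAddCommGroup X] [NormedSpace ℝ X] (a b : X) :
    ∃ f : X → ℝ, (∃ C, ∀ x, |f x| ≤ C) ∧ LipschitzWith 1 f ∧ Differentiable ℝ f ∧
      f a - f b = ‖a - b‖ := by
  obtain ⟨g, hg_norm, hg⟩ := exists_dual_vector'' ℝ (a - b)
  obtain ⟨φ, ⟨C, hC⟩, hφ_lip, hφ_diff, hφ_id⟩ :=
    exists_bounded_differentiable_lipschitzWith_one_eqOn_id (max |g a| |g b|)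
  have hg_lip : LipschitzWith 1 g := g.lipschitz.weaken (by exact_mod_cast hg_norm)
  refine ⟨φ ∘ g, ⟨C, fun x => hC (g x)⟩, by simpa using hφ_lip.comp hg_lip,
    hφ_diff.comp g.differentiable, ?_⟩
  simp only [Function.comp_apply]
  rw [hφ_id _ (le_max_left _ _), hφ_id _ (le_max_right _ _), ← map_sub, hg]
  rfl

section bestLip

variable {X : Type*} [NormedAddCommGroup X] {f : X → ℝ} {K : NNReal}

lemma LipschitzWith.abs_sub_div_norm_sub_le (hf : LipschitzWith K f) (x y : X) :
    |f x - f y| / ‖x - y‖ ≤ K := by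
  rcases eq_or_ne x y with rfl | hxy
  · simp
  · rw [div_le_iff₀ (norm_sub_pos_iff.2 hxy)]
    simpa [Real.dist_eq, dist_eq_norm] using hf.dist_le_mul x y

lemma LipschitzWith.bestLip_le (hf : LipschitzWith K f) : bestLip f ≤ K :=
  csSup_le (Set.range_nonempty _) (Set.forall_mem_range.2 fun _ => hf.abs_sub_div_norm_sub_le _ _)

lemma LipschitzWith.abs_sub_div_norm_sub_le_bestLip (hf : LipschitzWith K f) (x y : X) :
    |f x - f y| / ‖x - y‖ ≤ bestLip f :=
  le_csSup ⟨K, Set.forall_mem_range.2 fun _ => hf.abs_sub_div_norm_sub_le _ _⟩ ⟨(x, y), rfl⟩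

lemma LipschitzWith.abs_sub_le_bestLip_mul (hf : LipschitzWith K f) (x y : X) :
    |f x - f y| ≤ bestLip f * ‖x - y‖ := by
  rcases eq_or_ne x y with rfl | hxy
  · simp
  · exact (div_le_iff₀ (norm_sub_pos_iff.2 hxy)).1 (hf.abs_sub_div_norm_sub_le_bestLip x y)

lemma LipschitzWith.bestLip_eq_of_abs_sub_eq (hf : LipschitzWith K f) {x y : X} (hxy : x ≠ y)
    (h : |f x - f y| = K * ‖x - y‖) : bestLip f = K := by
  refine le_antisymm hf.bestLip_le ?_
  have := hf.abs_sub_div_norm_sub_le_bestLip x y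
  rwa [h, mul_div_cancel_right₀ _ (norm_ne_zero_iff.2 (sub_ne_zero.2 hxy))] at this

end bestLip

lemma sSup_abs_sub_div_bestLip_eq_norm_sub {X : Type*} [NormedAddCommGroup X] [NormedSpace ℝ X]
    (P : (X → ℝ) → Prop) (hP : ∀ f, Differentiable ℝ f → P f) (a b : X) :
    sSup {r : ℝ | ∃ f : X → ℝ,
        (∃ C : ℝ, ∀ x, |f x| ≤ C) ∧ (∃ K : NNReal, LipschitzWith K f) ∧
        P f ∧ 0 < bestLip f ∧ r = |f a - f b| / bestLip f} = ‖a - b‖ := by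
  set S := {r : ℝ | ∃ f : X → ℝ,
        (∃ C : ℝ, ∀ x, |f x| ≤ C) ∧ (∃ K : NNReal, LipschitzWith K f) ∧
        P f ∧ 0 < bestLip f ∧ r = |f a - f b| / bestLip f}
  have h_le : ∀ r ∈ S, r ≤ ‖a - b‖ := by
    rintro r ⟨f, -, ⟨K, hf⟩, -, hpos, rfl⟩
    rw [div_le_iff₀ hpos, mul_comm]
    exact hf.abs_sub_le_bestLip_mul a b
  rcases eq_or_ne a b with rfl | hab
  · rw [sub_self, norm_zero] at h_le ⊢
    exact le_antisymm (Real.sSup_nonpos h_le) <| Real.sSup_nonneg <| by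
      rintro r ⟨f, -, -, -, hpos, rfl⟩
      positivity
  · obtain ⟨f, hf_bdd, hf_lip, hf_diff, hf_ab⟩ :=
      exists_bounded_differentiable_lipschitzWith_one_sub_eq_norm a b
    have hf_abs : |f a - f b| = ‖a - b‖ := by rw [hf_ab, abs_norm]
    have hf_best : bestLip f = 1 := by
      simpa using hf_lip.bestLip_eq_of_abs_sub_eq hab (by simpa using hf_abs)
    refine IsGreatest.csSup_eq ⟨⟨f, hf_bdd, ⟨1, hf_lip⟩, hP f hf_diff, ?_, ?_⟩, h_le⟩
    · rw [hf_best]; exact one_pos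
    · rw [hf_best, hf_abs, div_one]

theorem norm_sub_eq_sup_over_smooth_functions_general
    {X : Type*} [NormedAddCommGroup X] [NormedSpace ℝ X]
    (a b : X) :
    ‖a - b‖ = sSup {r : ℝ | ∃ f : X → ℝ,
        (∃ C : ℝ, ∀ x, |f x| ≤ C) ∧ (∃ K : NNReal, LipschitzWith K f) ∧
        Differentiable ℝ f ∧ 0 < bestLip f ∧ r = |f a - f b| / bestLip f} ∧
    ‖a - b‖ = sSup {r : ℝ | ∃ f : X → ℝ,
        (∃ C : ℝ, ∀ x, |f x| ≤ C) ∧ (∃ K : NNReal, LipschitzWith K f) ∧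
        (∀ x, GateauxDifferentiableAt f x) ∧ 0 < bestLip f ∧ r = |f a - f b| / bestLip f} :=
  ⟨(sSup_abs_sub_div_bestLip_eq_norm_sub _ (fun _ hf => hf) a b).symm,
    (sSup_abs_sub_div_bestLip_eq_norm_sub _ (fun _ hf => hf.gateauxDifferentiableAt) a b).symm⟩

/-- Let `X` be a Banach space and `a, b ∈ X`. Then `‖a - b‖` equals the
supremum over all bounded Lipschitz everywhere Fréchet differentiable `f : X → ℝ` with
strictly positive best Lipschitz constant of `|f a - f b| / bestLip f`, and also equals
the analogous supremum over all bounded Lipschitz everywhere Gâteaux differentiable `f`. -/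
theorem norm_sub_eq_sup_over_smooth_functions
    {X : Type*} [NormedAddCommGroup X] [NormedSpace ℝ X] [CompleteSpace X]
    (a b : X) :
    ‖a - b‖ = sSup {r : ℝ | ∃ f : X → ℝ,
        (∃ C : ℝ, ∀ x, |f x| ≤ C) ∧ (∃ K : NNReal, LipschitzWith K f) ∧
        Differentiable ℝ f ∧ 0 < bestLip f ∧ r = |f a - f b| / bestLip f} ∧
    ‖a - b‖ = sSup {r : ℝ | ∃ f : X → ℝ,
        (∃ C : ℝ, ∀ x, |f x| ≤ C) ∧ (∃ K : NNReal, LipschitzWith K f) ∧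
        (∀ x, GateauxDifferentiableAt f x) ∧ 0 < bestLip f ∧ r = |f a - f b| / bestLip f} :=
  norm_sub_eq_sup_over_smooth_functions_general a b
end

section
/- Let X, Y, Z be Banach spaces, U ⊆ X an open set, and T : Y → X a bounded linear operator of finite rank. If f : U → Z is finitely locally Lipschitz and Gâteaux differentiable at a point T y ∈ U (where y ∈ Y), then f ∘ T is Fréchet differentiable at y. -/
open Filter Metric Topology

section Defs
variable {X Z : Type*} [NormedAddCommGroup X] [NormedSpace ℝ X]
  [NormedAddCommGroup Z] [NormedSpace ℝ Z]

/-- `f` is finitely locally Lipschitz on an open set `U`: for every finite dimensional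
affine subspace `V` of `X` meeting `U`, the restriction of `f` to `U ∩ V` is locally
Lipschitz. -/
def FinitelyLocallyLipschitzOn (f : X → Z) (U : Set X) : Prop :=
  ∀ V : AffineSubspace ℝ X, FiniteDimensional ℝ V.direction →
    (U ∩ (V : Set X)).Nonempty →
      ∀ x ∈ U ∩ (V : Set X), ∃ (K : NNReal) (r : ℝ), 0 < r ∧
        LipschitzOnWith K f (U ∩ (V : Set X) ∩ ball x r)

/-- `f` is finitely Lipschitz: its restriction to every finite dimensional affine
subspace of `X` is Lipschitz. -/
def FinitelyLipschitz (f : X → Z) : Prop :=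
  ∀ V : AffineSubspace ℝ X, FiniteDimensional ℝ V.direction →
    ∃ K : NNReal, LipschitzOnWith K f (V : Set X)
end Defs

/-!
On the finite-dimensional range `V` of `T`, `f` is Lipschitz near `T y`. On a finite-dimensional
space, a Lipschitz map with a Gâteaux derivative is Fréchet differentiable: by compactness of the
unit sphere, finitely many directions control all of them
(`LipschitzWith.hasFDerivAt_of_hasLineDerivAt_of_closure`). That lemma asks for a globally
Lipschitz map; precomposing with the radial retraction onto a small ball around `T y` provides one
with the same germ. The chain rule through `T : Y → V` concludes.
-/

section RadialRetraction

variable {E F : Type*} [NormedAddCommGroup E] [NormedSpace ℝ E]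
  [NormedAddCommGroup F] [NormedSpace ℝ F]

noncomputable def radialRetraction (ρ : ℝ) (v : E) : E := min 1 (ρ / ‖v‖) • v

theorem norm_radialRetraction {ρ : ℝ} (hρ : 0 ≤ ρ) (v : E) :
    ‖radialRetraction ρ v‖ = min ‖v‖ ρ := by
  rcases eq_or_ne v 0 with rfl | hv
  · simp [radialRetraction, hρ]
  have hv' : 0 < ‖v‖ := norm_pos_iff.mpr hv
  rw [radialRetraction, norm_smul, Real.norm_of_nonneg (le_min zero_le_one (by positivity)),
    min_mul_of_nonneg _ _ hv'.le, one_mul, div_mul_cancel₀ _ hv'.ne']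

theorem radialRetraction_of_norm_le {ρ : ℝ} {v : E} (hv : ‖v‖ ≤ ρ) :
    radialRetraction ρ v = v := by
  rcases eq_or_ne v 0 with rfl | hv0
  · simp [radialRetraction]
  rw [radialRetraction, min_eq_left ((one_le_div (norm_pos_iff.mpr hv0)).mpr hv), one_smul]

theorem lipschitzWith_radialRetraction {ρ : ℝ} (hρ : 0 ≤ ρ) :
    LipschitzWith 2 (radialRetraction ρ : E → E) := by
  refine LipschitzWith.of_dist_le_mul fun u v => ?_
  wlog huv : ‖v‖ ≤ ‖u‖ generalizing u v
  · rw [dist_comm, dist_comm u]; exact this v u (le_of_not_ge huv)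
  rw [dist_eq_norm, dist_eq_norm, NNReal.coe_ofNat]
  by_cases hu : ‖u‖ ≤ ρ
  · rw [radialRetraction_of_norm_le hu, radialRetraction_of_norm_le (huv.trans hu)]
    linarith [norm_nonneg (u - v)]
  replace hu := not_le.mp hu
  set a := ρ / ‖u‖
  set s := min 1 (ρ / ‖v‖)
  have hu₀ : 0 < ‖u‖ := hρ.trans_lt hu
  have ha₀ : 0 ≤ a := by positivity
  have ha₁ : a ≤ 1 := (div_le_one hu₀).mpr hu.le
  have hau : a * ‖u‖ = ρ := div_mul_cancel₀ _ hu₀.ne'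
  have hPu : radialRetraction ρ u = a • u := by rw [radialRetraction, min_eq_right ha₁]
  have hsv : s * ‖v‖ = min ‖v‖ ρ := by
    rw [← norm_radialRetraction hρ v, radialRetraction, norm_smul,
      Real.norm_of_nonneg (le_min zero_le_one (by positivity))]
  -- both `a • v` and `radialRetraction ρ v` lie on the ray through `v`, with lengths
  -- `a * ‖v‖ ≤ min ‖v‖ ρ ≤ a * ‖u‖`
  have hradial : ‖a • v - radialRetraction ρ v‖ ≤ ‖u‖ - ‖v‖ := by
    have hav : a * ‖v‖ ≤ min ‖v‖ ρ :=
      le_min (mul_le_of_le_one_left (norm_nonneg v) ha₁) (hau ▸ by gcongr)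
    calc ‖a • v - radialRetraction ρ v‖ = |a * ‖v‖ - min ‖v‖ ρ| := by
          rw [radialRetraction, ← sub_smul, norm_smul, ← hsv, ← sub_mul, abs_mul, abs_norm,
            Real.norm_eq_abs]
      _ ≤ ‖u‖ - ‖v‖ := by
          rw [abs_sub_le_iff]
          constructor <;> nlinarith [min_le_right ‖v‖ ρ]
  calc ‖radialRetraction ρ u - radialRetraction ρ v‖
      = ‖a • (u - v) + (a • v - radialRetraction ρ v)‖ := by rw [hPu, smul_sub]; abel_nf
    _ ≤ a * ‖u - v‖ + (‖u‖ - ‖v‖) := by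
        refine (norm_add_le _ _).trans (add_le_add ?_ hradial)
        rw [norm_smul, Real.norm_of_nonneg ha₀]
    _ ≤ 2 * ‖u - v‖ := by nlinarith [norm_sub_norm_le u v, norm_nonneg (u - v)]

theorem LipschitzOnWith.hasFDerivAt_of_hasLineDerivAt [FiniteDimensional ℝ E] {f : E → F}
    {K : NNReal} {x : E} {r : ℝ} (hr : 0 < r) (hf : LipschitzOnWith K f (ball x r))
    {L : E →L[ℝ] F} (hL : ∀ v, HasLineDerivAt ℝ f (L v) x v) : HasFDerivAt f L x := by
  set g : E → F := fun v => f (x + radialRetraction (r / 2) (v - x))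
  have hg : LipschitzWith (K * 2) g := by
    refine lipschitzOnWith_univ.mp (hf.comp (LipschitzWith.lipschitzOnWith ?_) fun v _ => ?_)
    · refine LipschitzWith.of_dist_le_mul fun u v => ?_
      rw [dist_add_left, ← dist_sub_right u v x]
      exact (lipschitzWith_radialRetraction (by positivity)).dist_le_mul _ _
    · rw [mem_ball, dist_self_add_left, norm_radialRetraction (by positivity)]
      exact (min_le_right _ _).trans_lt (half_lt_self hr)
  have hgf : g =ᶠ[𝓝 x] f := by
    filter_upwards [ball_mem_nhds x (half_pos hr)] with v hv
    rw [mem_ball, dist_eq_norm] at hv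
    simp only [g, radialRetraction_of_norm_le hv.le, add_sub_cancel]
  refine HasFDerivAt.congr_of_eventuallyEq ?_ hgf.symm
  exact hg.hasFDerivAt_of_hasLineDerivAt_of_closure (s := Set.univ) (by simp)
    fun v _ => (hL v).congr_of_eventuallyEq hgf

end RadialRetraction

section Gateaux

variable {X Y Z : Type*} [NormedAddCommGroup X] [NormedSpace ℝ X]
  [NormedAddCommGroup Y] [NormedSpace ℝ Y] [NormedAddCommGroup Z]

theorem FinitelyLocallyLipschitzOn.exists_lipschitzOnWith_ball {f : X → Z} {U : Set X}
    (hf : FinitelyLocallyLipschitzOn f U) (hU : IsOpen U) (V : Submodule ℝ X)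
    [FiniteDimensional ℝ V] {x : V} (hx : (x : X) ∈ U) :
    ∃ (K : NNReal) (r : ℝ), 0 < r ∧ LipschitzOnWith K (f ∘ V.subtype) (ball x r) := by
  have hV : FiniteDimensional ℝ V.toAffineSubspace.direction := by
    rwa [Submodule.toAffineSubspace_direction]
  obtain ⟨K, r, hr, hK⟩ := hf V.toAffineSubspace hV ⟨x, hx, x.2⟩ x ⟨hx, x.2⟩
  obtain ⟨ε, hε, hεU⟩ := Metric.isOpen_iff.mp hU x hx
  refine ⟨K, min r ε, lt_min hr hε, ?_⟩
  have hmaps : Set.MapsTo V.subtype (ball x (min r ε)) (U ∩ V.toAffineSubspace ∩ ball (x : X) r) :=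
    fun v hv => ⟨⟨hεU (ball_subset_ball (min_le_right r ε) hv), v.2⟩,
      ball_subset_ball (min_le_left r ε) hv⟩
  simpa using hK.comp V.subtypeₗᵢ.lipschitz.lipschitzOnWith hmaps

variable [NormedSpace ℝ Z]

theorem HasGateauxDerivAt.hasLineDerivAt {f : X → Z} {A : X →L[ℝ] Z} {x : X}
    (h : HasGateauxDerivAt f A x) (v : X) : HasLineDerivAt ℝ f (A v) x v := by
  rw [HasLineDerivAt, hasDerivAt_iff_tendsto_slope]
  convert h v using 2 with t
  simp [slope_def_module]

theorem HasGateauxDerivAt.comp_continuousLinearMap {f : X → Z} {A : X →L[ℝ] Z} (S : Y →L[ℝ] X)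
    {y : Y} (h : HasGateauxDerivAt f A (S y)) : HasGateauxDerivAt (f ∘ S) (A.comp S) y := by
  intro v
  simpa using h (S v)

end Gateaux

theorem finiteRank_gateaux_implies_frechet_general
    {X Y Z : Type*} [NormedAddCommGroup X] [NormedSpace ℝ X]
    [NormedAddCommGroup Y] [NormedSpace ℝ Y]
    [NormedAddCommGroup Z] [NormedSpace ℝ Z]
    (U : Set X) (hU : IsOpen U) (T : Y →L[ℝ] X)
    (hT : FiniteDimensional ℝ (LinearMap.range (T : Y →ₗ[ℝ] X)))
    (f : X → Z) (hf : FinitelyLocallyLipschitzOn f U)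
    (y : Y) (hy : T y ∈ U) (hG : GateauxDifferentiableAt f (T y)) :
    DifferentiableAt ℝ (f ∘ T) y := by
  obtain ⟨A, hA⟩ := hG
  set V := LinearMap.range (T : Y →ₗ[ℝ] X)
  have : FiniteDimensional ℝ V := hT
  let T' : Y →L[ℝ] V := T.codRestrict V fun y => LinearMap.mem_range_self _ y
  obtain ⟨K, r, hr, hK⟩ := hf.exists_lipschitzOnWith_ball hU V (x := T' y) hy
  have hA' : HasGateauxDerivAt (f ∘ V.subtypeL) (A.comp V.subtypeL) (T' y) :=
    HasGateauxDerivAt.comp_continuousLinearMap (y := T' y) V.subtypeL hA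
  have hD : HasFDerivAt (f ∘ V.subtypeL) (A.comp V.subtypeL) (T' y) :=
    hK.hasFDerivAt_of_hasLineDerivAt hr hA'.hasLineDerivAt
  exact (hD.comp y T'.hasFDerivAt).differentiableAt

/-- Let `X`, `Y`, `Z` be Banach spaces, `U ⊆ X` open and `T : Y → X` a
finite rank bounded linear operator. If `f : U → Z` is finitely locally Lipschitz and
Gâteaux differentiable at `T y ∈ U`, then `f ∘ T` is Fréchet differentiable at `y`. -/
theorem finiteRank_gateaux_implies_frechet
    {X Y Z : Type*} [NormedAddCommGroup X] [NormedSpace ℝ X] [CompleteSpace X]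
    [NormedAddCommGroup Y] [NormedSpace ℝ Y] [CompleteSpace Y]
    [NormedAddCommGroup Z] [NormedSpace ℝ Z] [CompleteSpace Z]
    (U : Set X) (hU : IsOpen U) (T : Y →L[ℝ] X)
    (hT : FiniteDimensional ℝ (LinearMap.range (T : Y →ₗ[ℝ] X)))
    (f : X → Z) (hf : FinitelyLocallyLipschitzOn f U)
    (y : Y) (hy : T y ∈ U) (hG : GateauxDifferentiableAt f (T y)) :
    DifferentiableAt ℝ (f ∘ T) y :=
  finiteRank_gateaux_implies_frechet_general U hU T hT f hf y hy hG
end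

section
/- Let X, Y be Banach spaces and T : Y → X a bounded linear operator whose range T(Y) is infinite dimensional. Then there exists an injective linear map L : ℓ∞(ℕ) → (X → ℝ) such that for every μ ∈ ℓ∞(ℕ): L μ is finitely Lipschitz (its restriction to every finite dimensional affine subspace of X is Lipschitz), L μ vanishes at 0, L μ is Gâteaux differentiable at 0, and if μ ≠ 0 then (L μ) ∘ T is not Fréchet differentiable at 0. -/
open Filter Metric Topology

namespace Stmt19
variable {X : Type*} [NormedAddCommGroup X] [NormedSpace ℝ X]

noncomputable def bump (e : ℕ → X) (c : ℕ → ℝ) (i : ℕ) (x : X) : ℝ :=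
  max 0 (c i / 8 - ‖x - c i • e i‖)

structure Good (e : ℕ → X) (c : ℕ → ℝ) : Prop where
  cpos : ∀ i, 0 < c i
  cratio : ∀ i j, i < j → c j ≤ c i / 16
  eub : ∀ i, ‖e i‖ ≤ 3
  elb : ∀ i, 1/2 ≤ ‖e i‖
  sep : ∀ i j, i ≠ j → 1 ≤ ‖e i - e j‖

variable {e : ℕ → X} {c : ℕ → ℝ}

theorem bump_nonneg (i : ℕ) (x : X) : 0 ≤ bump e c i x := le_max_left _ _

theorem bump_le (hg : Good e c) (i : ℕ) (x : X) : bump e c i x ≤ c i / 8 :=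
  max_le (by linarith [hg.cpos i]) (by linarith [norm_nonneg (x - c i • e i)])

theorem bump_eq_zero {i : ℕ} {x : X} (h : c i / 8 ≤ ‖x - c i • e i‖) : bump e c i x = 0 :=
  max_eq_left (by linarith)

theorem bump_eq_of_lt {i : ℕ} {x : X} (h : ‖x - c i • e i‖ < c i / 8) :
    bump e c i x = c i / 8 - ‖x - c i • e i‖ :=
  max_eq_right (by linarith)

theorem bump_sub_le (i : ℕ) (x y : X) : |bump e c i x - bump e c i y| ≤ ‖x - y‖ := by
  unfold bump
  rw [max_comm 0 _, max_comm 0 _]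
  refine (abs_max_sub_max_le_abs _ _ _).trans ?_
  have h1 : (c i / 8 - ‖x - c i • e i‖) - (c i / 8 - ‖y - c i • e i‖)
      = ‖y - c i • e i‖ - ‖x - c i • e i‖ := by ring
  rw [h1]
  refine (abs_norm_sub_norm_le _ _).trans ?_
  rw [show (y - c i • e i) - (x - c i • e i) = y - x by abel, norm_sub_rev]

theorem norm_center_lb (hg : Good e c) (i : ℕ) : c i / 2 ≤ ‖c i • e i‖ := by
  rw [norm_smul, Real.norm_eq_abs, abs_of_pos (hg.cpos i)]
  nlinarith [hg.elb i, (hg.cpos i)]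

theorem norm_center_ub (hg : Good e c) (i : ℕ) : ‖c i • e i‖ ≤ 3 * c i := by
  rw [norm_smul, Real.norm_eq_abs, abs_of_pos (hg.cpos i)]
  nlinarith [hg.eub i, (hg.cpos i)]

theorem disj (hg : Good e c) {i j : ℕ} (hij : i ≠ j) {x : X}
    (hx : ‖x - c i • e i‖ < c i / 8) : c j / 8 ≤ ‖x - c j • e j‖ := by
  have tri : ‖c i • e i - c j • e j‖ ≤ ‖x - c i • e i‖ + ‖x - c j • e j‖ := by
    calc ‖c i • e i - c j • e j‖ = ‖(c i • e i - x) - (c j • e j - x)‖ := by abel_nf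
      _ ≤ ‖c i • e i - x‖ + ‖c j • e j - x‖ := norm_sub_le _ _
      _ = ‖x - c i • e i‖ + ‖x - c j • e j‖ := by
          rw [norm_sub_rev (c i • e i), norm_sub_rev (c j • e j)]
  rcases lt_or_gt_of_ne hij with h | h
  · have hr := hg.cratio i j h
    have h1 : c i / 2 - 3 * c j ≤ ‖c i • e i - c j • e j‖ := by
      have := norm_sub_norm_le (c i • e i) (c j • e j)
      linarith [norm_center_lb hg i, norm_center_ub hg j]
    linarith [hg.cpos i, hg.cpos j]
  · have hr := hg.cratio j i h
    have h1 : c j / 2 - 3 * c i ≤ ‖c i • e i - c j • e j‖ := by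
      have := norm_sub_norm_le (c j • e j) (c i • e i)
      rw [norm_sub_rev] at this
      linarith [norm_center_lb hg j, norm_center_ub hg i]
    linarith [hg.cpos i, hg.cpos j]

theorem fin (hg : Good e c) (V : Submodule ℝ X) (hV : FiniteDimensional ℝ V) :
    {i : ℕ | ∃ p ∈ V, ‖p - c i • e i‖ ≤ c i / 8}.Finite := by
  by_contra hinf
  have hinf' : Set.Infinite {i : ℕ | ∃ p ∈ V, ‖p - c i • e i‖ ≤ c i / 8} := hinf
  have hch : ∀ i ∈ {i : ℕ | ∃ p ∈ V, ‖p - c i • e i‖ ≤ c i / 8},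
      ∃ q : ↥V, ‖(q : X) - e i‖ ≤ 1/8 ∧ ‖q‖ ≤ 25/8 := by
    rintro i ⟨p, hpV, hp⟩
    have hci := hg.cpos i
    have key : ‖(c i)⁻¹ • p - e i‖ ≤ 1/8 := by
      have h2 : (c i)⁻¹ • p - e i = (c i)⁻¹ • (p - c i • e i) := by
        rw [smul_sub, smul_smul, inv_mul_cancel₀ hci.ne', one_smul]
      rw [h2, norm_smul, Real.norm_eq_abs, abs_of_pos (inv_pos.2 hci), inv_mul_le_iff₀ hci]
      linarith
    refine ⟨⟨(c i)⁻¹ • p, V.smul_mem _ hpV⟩, key, ?_⟩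
    have h2 : ‖(c i)⁻¹ • p‖ ≤ ‖e i‖ + 1/8 := by
      have := norm_sub_norm_le ((c i)⁻¹ • p) (e i)
      linarith
    show ‖(c i)⁻¹ • p‖ ≤ 25/8
    linarith [hg.eub i]
  choose Q hQ1 hQ2 using hch
  have hcomp : IsCompact (closedBall (0 : ↥V) (25/8)) := isCompact_closedBall _ _
  obtain ⟨t, htfin, htcov⟩ :=
    (Metric.totallyBounded_iff).1 hcomp.totallyBounded (1/4) (by norm_num)
  have hmaps : ∀ i (hi : i ∈ {i : ℕ | ∃ p ∈ V, ‖p - c i • e i‖ ≤ c i / 8}),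
      ∃ y ∈ t, Q i hi ∈ ball y (1/4) := by
    intro i hi
    have hmem : Q i hi ∈ closedBall (0 : ↥V) (25/8) := by
      rw [mem_closedBall, dist_zero_right]; exact hQ2 i hi
    simpa using htcov hmem
  obtain ⟨i₀, hi₀⟩ := hinf'.nonempty
  classical
  have φdef : ∀ i, ∃ y : ↥V, ∀ hi : i ∈ {i : ℕ | ∃ p ∈ V, ‖p - c i • e i‖ ≤ c i / 8},
      y ∈ t ∧ Q i hi ∈ ball y (1/4) := by
    intro i
    by_cases hi : i ∈ {i : ℕ | ∃ p ∈ V, ‖p - c i • e i‖ ≤ c i / 8}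
    · obtain ⟨y, hy1, hy2⟩ := hmaps i hi
      exact ⟨y, fun _ => ⟨hy1, hy2⟩⟩
    · exact ⟨(hmaps i₀ hi₀).choose, fun h => absurd h hi⟩
  choose φ hφ using φdef
  have hmapsTo : Set.MapsTo φ {i : ℕ | ∃ p ∈ V, ‖p - c i • e i‖ ≤ c i / 8} t :=
    fun i hi => (hφ i hi).1
  obtain ⟨i, hi, j, hj, hij, hfeq⟩ := hinf'.exists_ne_map_eq_of_mapsTo hmapsTo htfin
  have d1 : dist (Q i hi) (φ i) < 1/4 := mem_ball.1 (hφ i hi).2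
  have d2 : dist (Q j hj) (φ j) < 1/4 := mem_ball.1 (hφ j hj).2
  have dQ : dist (Q i hi) (Q j hj) < 1/2 := by
    calc dist (Q i hi) (Q j hj) ≤ dist (Q i hi) (φ i) + dist (φ j) (Q j hj) := by
          rw [hfeq]; exact dist_triangle _ _ _
      _ < 1/2 := by rw [dist_comm (φ j)]; linarith
  have dQX : ‖(Q i hi : X) - (Q j hj : X)‖ < 1/2 := by
    have heq : dist (Q i hi) (Q j hj) = ‖(Q i hi : X) - (Q j hj : X)‖ := by
      rw [dist_eq_norm]; rfl
    linarith [heq ▸ dQ]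
  have hlt : ‖e i - e j‖ < 1 := by
    have e1 := hQ1 i hi
    have e2 := hQ1 j hj
    calc ‖e i - e j‖
        = ‖(e i - (Q i hi : X)) + ((Q i hi : X) - (Q j hj : X)) + ((Q j hj : X) - e j)‖ := by
          abel_nf
      _ ≤ ‖e i - (Q i hi : X)‖ + ‖(Q i hi : X) - (Q j hj : X)‖ + ‖(Q j hj : X) - e j‖ :=
          norm_add₃_le
      _ < 1 := by
          have e1' : ‖e i - (Q i hi : X)‖ ≤ 1/8 := by rw [norm_sub_rev]; exact e1
          have e2' : ‖e j - (Q j hj : X)‖ ≤ 1/8 := by rw [norm_sub_rev]; exact e2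
          have e2'' : ‖(Q j hj : X) - e j‖ ≤ 1/8 := e2
          linarith
  linarith [hg.sep i j hij]


noncomputable def F (e : ℕ → X) (c : ℕ → ℝ) (b : ℕ → ℝ) (x : X) : ℝ :=
  ∑' i, b i * bump e c i x

theorem summable_F (hg : Good e c) (b : ℕ → ℝ) (x : X) :
    Summable fun i => b i * bump e c i x := by
  classical
  by_cases hx : ∃ i, ‖x - c i • e i‖ < c i / 8
  · refine summable_of_ne_finset_zero (s := {hx.choose}) ?_
    intro j hj
    simp only [Finset.mem_singleton] at hj
    rw [bump_eq_zero (disj hg (Ne.symm hj) hx.choose_spec), mul_zero]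
  · push_neg at hx
    refine summable_of_ne_finset_zero (s := ∅) ?_
    intro j _
    rw [bump_eq_zero (hx j), mul_zero]


theorem F_eq_single (hg : Good e c) (b : ℕ → ℝ) {x : X} {i : ℕ}
    (hi : ‖x - c i • e i‖ < c i / 8) : F e c b x = b i * bump e c i x := by
  refine tsum_eq_single i ?_
  intro j hj
  rw [bump_eq_zero (disj hg (Ne.symm hj) hi), mul_zero]

theorem F_eq_zero (b : ℕ → ℝ) {x : X}
    (hx : ∀ i, c i / 8 ≤ ‖x - c i • e i‖) : F e c b x = 0 := by
  have : (fun i => b i * bump e c i x) = fun _ => 0 := by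
    funext i; rw [bump_eq_zero (hx i), mul_zero]
  rw [F, this, tsum_zero]


theorem exists_vanish (hg : Good e c) (b : ℕ → ℝ) (h : X) :
    ∃ t₀ > 0, ∀ t : ℝ, |t| < t₀ → F e c b (t • h) = 0 := by
  classical
  have hS : {i : ℕ | ∃ p ∈ Submodule.span ℝ {h}, ‖p - c i • e i‖ ≤ c i / 8}.Finite :=
    fin hg (Submodule.span ℝ {h}) inferInstance
  have hbnd : ∃ t₀ > 0, ∀ i ∈ hS.toFinset, ∀ t : ℝ, |t| < t₀ → |t| * ‖h‖ ≤ 3 * c i / 8 := by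
    by_cases hne : hS.toFinset.Nonempty
    · set m := hS.toFinset.inf' hne (fun i => c i) with hm
      have hmpos : 0 < m := by
        rw [hm, Finset.lt_inf'_iff]
        exact fun i _ => hg.cpos i
      refine ⟨3 * m / (8 * (‖h‖ + 1)), by positivity, ?_⟩
      intro i hi t ht
      have hmle : m ≤ c i := Finset.inf'_le _ hi
      have hpos : (0:ℝ) < ‖h‖ + 1 := by linarith [norm_nonneg h]
      have h1 : |t| * (‖h‖ + 1) ≤ 3 * m / (8 * (‖h‖ + 1)) * (‖h‖ + 1) := by
        have := abs_nonneg t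
        nlinarith
      have h2 : 3 * m / (8 * (‖h‖ + 1)) * (‖h‖ + 1) = 3 * m / 8 := by
        field_simp
      have h3 : |t| * ‖h‖ ≤ |t| * (‖h‖ + 1) := by
        nlinarith [abs_nonneg t]
      linarith
    · refine ⟨1, one_pos, fun i hi => absurd hi ?_⟩
      rw [Finset.not_nonempty_iff_eq_empty] at hne
      simp [hne]
  obtain ⟨t₀, ht₀pos, ht₀⟩ := hbnd
  refine ⟨t₀, ht₀pos, ?_⟩
  intro t ht
  apply F_eq_zero
  intro i
  by_cases hi : i ∈ {i : ℕ | ∃ p ∈ Submodule.span ℝ {h}, ‖p - c i • e i‖ ≤ c i / 8}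
  · have hb := ht₀ i (hS.mem_toFinset.2 hi) t ht
    have h1 : ‖c i • e i‖ - ‖t • h‖ ≤ ‖t • h - c i • e i‖ := by
      have := norm_sub_norm_le (c i • e i) (t • h)
      rw [norm_sub_rev] at this
      linarith
    have h2 : ‖t • h‖ = |t| * ‖h‖ := by rw [norm_smul, Real.norm_eq_abs]
    linarith [norm_center_lb hg i]
  · by_contra hlt
    push_neg at hlt
    exact hi ⟨t • h, Submodule.smul_mem _ _ (Submodule.subset_span rfl), hlt.le⟩


theorem exists_master {Y : Type*} [NormedAddCommGroup Y] [NormedSpace ℝ Y]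
    (T : Y →L[ℝ] X) (hT : ¬ FiniteDimensional ℝ (LinearMap.range (T : Y →ₗ[ℝ] X))) :
    ∃ (e : ℕ → X) (w : ℕ → Y), (∀ i, T (w i) = e i) ∧ (∀ i, ‖e i‖ ≤ 3) ∧
      (∀ i, 1/2 ≤ ‖e i‖) ∧ ∀ i j, i ≠ j → 1 ≤ ‖e i - e j‖ := by
  classical
  set R := LinearMap.range (T : Y →ₗ[ℝ] X) with hR
  have hc2 : (1:ℝ) < ‖(2:ℝ)‖ := by norm_num
  have hc3 : ‖(2:ℝ)‖ < (3:ℝ) := by norm_num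
  obtain ⟨f, hfR, hfsep⟩ := exists_seq_norm_le_one_le_norm_sub' (E := ↥R) hc2 hc3 hT
  -- at most one index with small norm
  have huniq : ∀ i j, ‖f i‖ < 1/2 → ‖f j‖ < 1/2 → i = j := by
    intro i j hi hj
    by_contra hij
    have h1 := hfsep hij
    have h2 : ‖f i - f j‖ ≤ ‖f i‖ + ‖f j‖ := norm_sub_le _ _
    have h1' : 1 ≤ ‖f i - f j‖ := h1
    linarith
  have hg : ∃ g : ℕ → ↥R, (∀ n, ‖g n‖ ≤ 3) ∧ (∀ n, 1/2 ≤ ‖g n‖) ∧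
      ∀ i j, i ≠ j → 1 ≤ ‖g i - g j‖ := by
    by_cases hb : ∃ i0, ‖f i0‖ < 1/2
    · obtain ⟨i0, hi0⟩ := hb
      refine ⟨fun i => f (i + i0 + 1), fun n => hfR _, ?_, ?_⟩
      · intro n
        by_contra hn
        push_neg at hn
        have := huniq _ _ hn hi0
        omega
      · intro i j hij
        exact hfsep (by omega)
    · push_neg at hb
      exact ⟨f, hfR, hb, fun i j hij => hfsep hij⟩
  obtain ⟨g, hg3, hghalf, hgsep⟩ := hg
  have hwex : ∀ i, ∃ w : Y, T w = (g i : X) := fun i => LinearMap.mem_range.1 (g i).2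
  choose w hw using hwex
  exact ⟨fun i => (g i : X), w, hw, hg3, hghalf, hgsep⟩

end Stmt19

set_option maxHeartbeats 1600000 in
/-- Let `T : Y → X` be a bounded linear operator between Banach spaces
whose range is infinite dimensional. Then there is an injective linear map
`L : ℓ∞(ℕ) → (X → ℝ)` such that for every `μ ∈ ℓ∞(ℕ)`: `L μ` is finitely Lipschitz,
`L μ` vanishes at `0`, `L μ` is Gâteaux differentiable at `0`, and if `μ ≠ 0` then
`(L μ) ∘ T` is not Fréchet differentiable at `0`. -/
theorem lineability_of_bad_finitely_lipschitz_functions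
    {X Y : Type*} [NormedAddCommGroup X] [NormedSpace ℝ X] [CompleteSpace X]
    [NormedAddCommGroup Y] [NormedSpace ℝ Y] [CompleteSpace Y]
    (T : Y →L[ℝ] X)
    (hT : ¬ FiniteDimensional ℝ (LinearMap.range (T : Y →ₗ[ℝ] X))) :
    ∃ L : lp (fun _ : ℕ => ℝ) (⊤ : ENNReal) →ₗ[ℝ] (X → ℝ),
      Function.Injective L ∧
      ∀ μ : lp (fun _ : ℕ => ℝ) (⊤ : ENNReal),
        FinitelyLipschitz (L μ) ∧
        L μ 0 = 0 ∧
        GateauxDifferentiableAt (L μ) 0 ∧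
        (μ ≠ 0 → ¬ DifferentiableAt ℝ (L μ ∘ T) 0) := by
  classical
  obtain ⟨e, w, hw, heub, helb, hsep⟩ := Stmt19.exists_master T hT
  set lam : ℕ → ℝ := fun i => ‖w i‖ + 1 with hlamdef
  have hlampos : ∀ i, 0 < lam i := fun i => by positivity
  have hwlam : ∀ i, ‖w i‖ ≤ lam i := fun i => by simp [hlamdef]
  set c : ℕ → ℝ := fun n =>
    Nat.rec (min 1 (1 / lam 0)) (fun n cn => min (cn / 16) (1 / ((n + 2) * lam (n + 1)))) n
    with hcdef
  have hc0 : c 0 = min 1 (1 / lam 0) := rfl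
  have hcsucc : ∀ n, c (n + 1) = min (c n / 16) (1 / ((n + 2) * lam (n + 1))) := fun n => rfl
  have hcpos : ∀ n, 0 < c n := by
    intro n
    induction n with
    | zero => rw [hc0]; exact lt_min one_pos (by positivity)
    | succ n ih =>
      rw [hcsucc]
      refine lt_min (by positivity) (by positivity)
  have hcstep : ∀ n, c (n + 1) ≤ c n / 16 := fun n => by rw [hcsucc]; exact min_le_left _ _
  have hcanti : ∀ i j, i ≤ j → c j ≤ c i := by
    intro i j hij
    induction j with
    | zero => simp_all
    | succ j ih =>
      rcases Nat.lt_or_ge i (j+1) with h | h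
      · have := ih (by omega)
        have := hcstep j
        have := hcpos j
        linarith
      · have : i = j + 1 := by omega
        simp [this]
  have hcratio : ∀ i j, i < j → c j ≤ c i / 16 := by
    intro i j hij
    obtain ⟨k, rfl⟩ : ∃ k, j = k + 1 := ⟨j - 1, by omega⟩
    have h1 := hcstep k
    have h2 := hcanti i k (by omega)
    linarith
  have hcsmall : ∀ i, c i * lam i ≤ 1 / (i + 1) := by
    intro i
    cases i with
    | zero =>
      have h1 : c 0 ≤ 1 / lam 0 := by rw [hc0]; exact min_le_right _ _
      have h2 := hlampos 0
      have hle : c 0 * lam 0 ≤ 1 := by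
        calc c 0 * lam 0 ≤ (1 / lam 0) * lam 0 := mul_le_mul_of_nonneg_right h1 h2.le
          _ = 1 := one_div_mul_cancel h2.ne'
      simpa using hle
    | succ n =>
      have h1 : c (n+1) ≤ 1 / ((n + 2) * lam (n + 1)) := by
        rw [hcsucc]; exact min_le_right _ _
      have h2 := hlampos (n+1)
      have h3 : (0:ℝ) < (n:ℝ) + 2 := by positivity
      calc c (n+1) * lam (n+1) ≤ (1 / ((n + 2) * lam (n + 1))) * lam (n+1) :=
            mul_le_mul_of_nonneg_right h1 h2.le
        _ = 1 / ((n:ℝ) + 2) := by field_simp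
        _ ≤ 1 / ((n+1:ℕ) + 1 : ℝ) := le_of_eq (by push_cast; ring)
  have hg : Stmt19.Good e c := ⟨hcpos, hcratio, heub, helb, hsep⟩
  clear hcdef hlamdef hc0 hcsucc hcstep hcanti hcratio
  clear_value lam c
  set bco : (lp (fun _ : ℕ => ℝ) (⊤ : ENNReal)) → ℕ → ℝ :=
    fun μ i => μ (Nat.unpair i).1 * lam i with hbcodef
  set L : lp (fun _ : ℕ => ℝ) (⊤ : ENNReal) →ₗ[ℝ] (X → ℝ) :=
    { toFun := fun μ x => Stmt19.F e c (bco μ) x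
      map_add' := by
        intro μ ν
        funext x
        have hterm : ∀ i, bco (μ + ν) i * Stmt19.bump e c i x
            = bco μ i * Stmt19.bump e c i x + bco ν i * Stmt19.bump e c i x := by
          intro i
          have : (μ + ν) (Nat.unpair i).1 = μ (Nat.unpair i).1 + ν (Nat.unpair i).1 := by
            rw [lp.coeFn_add]; rfl
          simp only [hbcodef, this]
          ring
        show Stmt19.F e c (bco (μ + ν)) x = _
        rw [Stmt19.F, tsum_congr hterm,
          Summable.tsum_add (Stmt19.summable_F hg (bco μ) x) (Stmt19.summable_F hg (bco ν) x)]
        rfl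
      map_smul' := by
        intro r μ
        funext x
        have hterm : ∀ i, bco (r • μ) i * Stmt19.bump e c i x
            = r * (bco μ i * Stmt19.bump e c i x) := by
          intro i
          have : (r • μ) (Nat.unpair i).1 = r * μ (Nat.unpair i).1 := by
            rw [lp.coeFn_smul]; rfl
          simp only [hbcodef, this]
          ring
        show Stmt19.F e c (bco (r • μ)) x = r • Stmt19.F e c (bco μ) x
        rw [Stmt19.F, tsum_congr hterm, tsum_mul_left, smul_eq_mul]
        rfl } with hLdef
  have hLval : ∀ μ x, L μ x = Stmt19.F e c (bco μ) x := fun μ x => rfl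
  -- value at the center of bump i
  have hcenter : ∀ μ i, L μ (c i • e i) = (μ (Nat.unpair i).1 * lam i) * (c i / 8) := by
    intro μ i
    have hact : ‖(c i • e i) - c i • e i‖ < c i / 8 := by
      rw [sub_self, norm_zero]; linarith [hcpos i]
    rw [hLval, Stmt19.F_eq_single hg _ hact, Stmt19.bump_eq_of_lt hact, sub_self, norm_zero,
      sub_zero]
  -- value at 0
  have hzero : ∀ μ, L μ 0 = 0 := by
    intro μ
    rw [hLval]
    apply Stmt19.F_eq_zero
    intro i
    rw [zero_sub, norm_neg]
    linarith [Stmt19.norm_center_lb hg i, hcpos i]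
  refine ⟨L, ?_, ?_⟩
  · -- injectivity
    rw [injective_iff_map_eq_zero]
    intro μ hμ
    apply lp.ext
    funext n
    have h1 : μ n * lam (Nat.pair n 0) * (c (Nat.pair n 0) / 8) = 0 := by
      have h0 := congrFun hμ (c (Nat.pair n 0) • e (Nat.pair n 0))
      rw [hcenter] at h0
      simpa [Nat.unpair_pair] using h0
    have h2 := hlampos (Nat.pair n 0)
    have h3 := hcpos (Nat.pair n 0)
    have hμn : μ n = 0 := by
      by_contra hne
      exact (mul_ne_zero (mul_ne_zero hne h2.ne') (div_pos h3 (by norm_num)).ne') h1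
    simp [hμn, lp.coeFn_zero]
  · intro μ
    refine ⟨?_, hzero μ, ?_, ?_⟩
    · -- finitely Lipschitz
      intro V hVdir
      by_cases hne : (V : Set X).Nonempty
      · obtain ⟨v₀, hv₀⟩ := hne
        haveI := hVdir
        set V' : Submodule ℝ X := V.direction ⊔ Submodule.span ℝ {v₀} with hV'def
        haveI : FiniteDimensional ℝ V' := inferInstance
        have hSfin := Stmt19.fin hg V' inferInstance
        set sF := hSfin.toFinset with hsFdef
        obtain ⟨B, hBnn, hBmem⟩ : ∃ B : ℝ, 0 ≤ B ∧ ∀ i ∈ sF, lam i ≤ B :=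
          ⟨∑ i ∈ sF, lam i, Finset.sum_nonneg fun i _ => (hlampos i).le,
            fun i hi => Finset.single_le_sum (fun j _ => (hlampos j).le) hi⟩
        have hmemS : ∀ x ∈ (V : Set X), ∀ i, ‖x - c i • e i‖ < c i / 8 → i ∈ sF := by
          intro x hx i hxi
          rw [hsFdef, Set.Finite.mem_toFinset]
          refine ⟨x, ?_, hxi.le⟩
          have h1 : x -ᵥ v₀ ∈ V.direction := AffineSubspace.vsub_mem_direction hx hv₀
          rw [vsub_eq_sub] at h1
          have h2 : x = (x - v₀) + v₀ := by abel
          rw [h2]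
          exact Submodule.add_mem _ (Submodule.mem_sup_left h1)
            (Submodule.mem_sup_right (Submodule.mem_span_singleton_self v₀))
        have hmub : ∀ n, |μ n| ≤ ‖μ‖ := by
          intro n
          have := lp.norm_apply_le_norm (ENNReal.top_ne_zero) μ n
          rwa [Real.norm_eq_abs] at this
        have hone : ∀ (x y : X) (i : ℕ), ‖x - c i • e i‖ < c i / 8 →
            c i / 8 ≤ ‖y - c i • e i‖ →
            |L μ x| ≤ (‖μ‖ * lam i) * ‖x - y‖ := by
          intro x y i hx hy
          rw [hLval, Stmt19.F_eq_single hg _ hx, Stmt19.bump_eq_of_lt hx]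
          have htri : ‖y - c i • e i‖ ≤ ‖y - x‖ + ‖x - c i • e i‖ := by
            have h := norm_add_le (y - x) (x - c i • e i)
            rwa [sub_add_sub_cancel] at h
          have hb1 : c i / 8 - ‖x - c i • e i‖ ≤ ‖x - y‖ := by
            rw [norm_sub_rev x y]; linarith
          have hb0 : 0 ≤ c i / 8 - ‖x - c i • e i‖ := by linarith
          have habs : |bco μ i * (c i / 8 - ‖x - c i • e i‖)|
              = |μ (Nat.unpair i).1| * lam i * (c i / 8 - ‖x - c i • e i‖) := by
            rw [hbcodef, abs_mul, abs_mul, abs_of_pos (hlampos i), abs_of_nonneg hb0]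
          rw [habs]
          calc |μ (Nat.unpair i).1| * lam i * (c i / 8 - ‖x - c i • e i‖)
              ≤ |μ (Nat.unpair i).1| * lam i * ‖x - y‖ :=
                mul_le_mul_of_nonneg_left hb1 (mul_nonneg (abs_nonneg _) (hlampos i).le)
            _ ≤ ‖μ‖ * lam i * ‖x - y‖ :=
                mul_le_mul_of_nonneg_right
                  (mul_le_mul_of_nonneg_right (hmub _) (hlampos i).le) (norm_nonneg _)
        refine ⟨Real.toNNReal (2 * ‖μ‖ * B), ?_⟩
        rw [lipschitzOnWith_iff_dist_le_mul]
        intro x hx y hy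
        have h2B : (0:ℝ) ≤ 2 * ‖μ‖ * B :=
          mul_nonneg (mul_nonneg (by norm_num) (norm_nonneg μ)) hBnn
        rw [Real.dist_eq, dist_eq_norm, Real.coe_toNNReal _ h2B]
        have hC0 : 0 ≤ 2 * ‖μ‖ * B * ‖x - y‖ := mul_nonneg h2B (norm_nonneg _)
        by_cases hx1 : ∃ i, ‖x - c i • e i‖ < c i / 8
        · obtain ⟨i, hi⟩ := hx1
          have hiS := hmemS x hx i hi
          have hlami := hBmem i hiS
          by_cases hy1 : ∃ j, ‖y - c j • e j‖ < c j / 8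
          · obtain ⟨j, hj⟩ := hy1
            have hjS := hmemS y hy j hj
            have hlamj := hBmem j hjS
            by_cases hij : i = j
            · subst hij
              rw [hLval, hLval, Stmt19.F_eq_single hg _ hi, Stmt19.F_eq_single hg _ hj,
                ← mul_sub]
              rw [abs_mul]
              have h1 := Stmt19.bump_sub_le (e := e) (c := c) i x y
              have h2 : |bco μ i| = |μ (Nat.unpair i).1| * lam i := by
                rw [hbcodef, abs_mul, abs_of_pos (hlampos i)]
              rw [h2]
              have h3 := hmub (Nat.unpair i).1
              have h7 := norm_nonneg (x - y)
              have step1 : |μ (Nat.unpair i).1| * lam i * |Stmt19.bump e c i x - Stmt19.bump e c i y|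
                  ≤ |μ (Nat.unpair i).1| * lam i * ‖x - y‖ :=
                mul_le_mul_of_nonneg_left h1 (mul_nonneg (abs_nonneg _) (hlampos i).le)
              have step2 : |μ (Nat.unpair i).1| * lam i * ‖x - y‖ ≤ (‖μ‖ * B) * ‖x - y‖ :=
                mul_le_mul_of_nonneg_right
                  (mul_le_mul h3 hlami (hlampos i).le (norm_nonneg μ)) h7
              have nn : 0 ≤ (‖μ‖ * B) * ‖x - y‖ :=
                mul_nonneg (mul_nonneg (norm_nonneg μ) hBnn) h7
              linarith
            · have hyi : c i / 8 ≤ ‖y - c i • e i‖ := Stmt19.disj hg (Ne.symm hij) hj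
              have hxj : c j / 8 ≤ ‖x - c j • e j‖ := Stmt19.disj hg hij hi
              have b1 := hone x y i hi hyi
              have b2 := hone y x j hj hxj
              rw [norm_sub_rev y x] at b2
              have h8 := norm_nonneg (x - y)
              have si : (‖μ‖ * lam i) * ‖x - y‖ ≤ (‖μ‖ * B) * ‖x - y‖ :=
                mul_le_mul_of_nonneg_right
                  (mul_le_mul_of_nonneg_left hlami (norm_nonneg μ)) h8
              have sj : (‖μ‖ * lam j) * ‖x - y‖ ≤ (‖μ‖ * B) * ‖x - y‖ :=
                mul_le_mul_of_nonneg_right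
                  (mul_le_mul_of_nonneg_left hlamj (norm_nonneg μ)) h8
              calc |L μ x - L μ y| ≤ |L μ x| + |L μ y| := abs_sub _ _
                _ ≤ (‖μ‖ * lam i) * ‖x - y‖ + (‖μ‖ * lam j) * ‖x - y‖ := by linarith
                _ ≤ 2 * ‖μ‖ * B * ‖x - y‖ := by linarith
          · push_neg at hy1
            have hLy : L μ y = 0 := by
              rw [hLval]; exact Stmt19.F_eq_zero _ hy1
            rw [hLy, sub_zero]
            have b1 := hone x y i hi (hy1 i)
            have h8 := norm_nonneg (x - y)
            have si : (‖μ‖ * lam i) * ‖x - y‖ ≤ (‖μ‖ * B) * ‖x - y‖ :=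
              mul_le_mul_of_nonneg_right
                (mul_le_mul_of_nonneg_left hlami (norm_nonneg μ)) h8
            have nn : 0 ≤ (‖μ‖ * B) * ‖x - y‖ :=
              mul_nonneg (mul_nonneg (norm_nonneg μ) hBnn) h8
            linarith
        · push_neg at hx1
          have hLx : L μ x = 0 := by
            rw [hLval]; exact Stmt19.F_eq_zero _ hx1
          rw [hLx, zero_sub, abs_neg]
          by_cases hy1 : ∃ j, ‖y - c j • e j‖ < c j / 8
          · obtain ⟨j, hj⟩ := hy1
            have hjS := hmemS y hy j hj
            have hlamj := hBmem j hjS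
            have b2 := hone y x j hj (hx1 j)
            rw [norm_sub_rev y x] at b2
            have h8 := norm_nonneg (x - y)
            have sj : (‖μ‖ * lam j) * ‖x - y‖ ≤ (‖μ‖ * B) * ‖x - y‖ :=
              mul_le_mul_of_nonneg_right
                (mul_le_mul_of_nonneg_left hlamj (norm_nonneg μ)) h8
            have nn : 0 ≤ (‖μ‖ * B) * ‖x - y‖ :=
              mul_nonneg (mul_nonneg (norm_nonneg μ) hBnn) h8
            linarith
          · push_neg at hy1
            have hLy : L μ y = 0 := by
              rw [hLval]; exact Stmt19.F_eq_zero _ hy1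
            rw [hLy, abs_zero]
            exact hC0
      · rw [Set.not_nonempty_iff_eq_empty] at hne
        exact ⟨0, by rw [hne]; exact lipschitzOnWith_empty _ _⟩
    · -- Gateaux
      refine ⟨0, fun h => ?_⟩
      obtain ⟨t₀, ht₀pos, hvan⟩ := Stmt19.exists_vanish hg (bco μ) h
      have hev : ∀ᶠ t in 𝓝[≠] (0:ℝ),
          (fun _ => (0:ℝ)) t = t⁻¹ • (L μ (0 + t • h) - L μ 0) := by
        filter_upwards [mem_nhdsWithin_of_mem_nhds
          (Ioo_mem_nhds (neg_lt_zero.2 ht₀pos) ht₀pos)] with t ht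
        rw [zero_add, hzero μ, hLval, hvan t (abs_lt.2 ⟨ht.1, ht.2⟩), sub_zero, smul_zero]
      have h0 : ((0 : X →L[ℝ] ℝ) h) = 0 := rfl
      rw [h0]
      exact (tendsto_const_nhds : Filter.Tendsto (fun _ : ℝ => (0:ℝ)) _ _).congr' hev
    · -- non-Frechet
      intro hμne hdiff
      have hn0 : ∃ n, μ n ≠ 0 := by
        by_contra hno
        push_neg at hno
        apply hμne
        apply lp.ext
        funext n
        simp [hno n, lp.coeFn_zero]
      obtain ⟨n0, hn0⟩ := hn0
      have hD : HasFDerivAt (L μ ∘ T) (fderiv ℝ (L μ ∘ T) 0) 0 := hdiff.hasFDerivAt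
      have hD0 : fderiv ℝ (L μ ∘ T) 0 = 0 := by
        ext z
        obtain ⟨t₀, ht₀pos, hvan⟩ := Stmt19.exists_vanish hg (bco μ) (T z)
        have h1 : HasDerivAt (fun t : ℝ => t • z) z 0 := by
          simpa using (hasDerivAt_id (0:ℝ)).smul_const z
        have hD' : HasFDerivAt (L μ ∘ T) (fderiv ℝ (L μ ∘ T) 0) ((fun t : ℝ => t • z) 0) := by
          simpa using hD
        have hline := hD'.comp_hasDerivAt (0:ℝ) h1
        have heq : ((L μ ∘ T) ∘ fun t : ℝ => t • z) =ᶠ[𝓝 (0:ℝ)] fun _ => (0:ℝ) := by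
          filter_upwards [Ioo_mem_nhds (neg_lt_zero.2 ht₀pos) ht₀pos] with t ht
          show L μ (T (t • z)) = 0
          rw [map_smul, hLval]
          exact hvan t (abs_lt.2 ⟨ht.1, ht.2⟩)
        have hline0 : HasDerivAt (fun _ : ℝ => (0:ℝ)) (fderiv ℝ (L μ ∘ T) 0 z) 0 :=
          hline.congr_of_eventuallyEq heq.symm
        have huniq := hline0.unique (hasDerivAt_const 0 0)
        simpa using huniq
      rw [hD0] at hD
      have hlo := hD.isLittleO
      have hmun0 : 0 < |μ n0| := abs_pos.2 hn0
      have hev := Asymptotics.isLittleO_iff.1 hlo (show (0:ℝ) < |μ n0| / 16 by positivity)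
      rw [Metric.eventually_nhds_iff] at hev
      obtain ⟨δ, hδpos, hδ⟩ := hev
      obtain ⟨k, hk⟩ := exists_nat_one_div_lt hδpos
      set i := Nat.pair n0 k with hidef
      set z := c i • w i with hzdef
      have hwpos : 0 ≤ ‖w i‖ := norm_nonneg _
      have hzn : ‖z‖ ≤ c i * lam i := by
        rw [hzdef, norm_smul, Real.norm_eq_abs, abs_of_pos (hcpos i)]
        exact mul_le_mul_of_nonneg_left (hwlam i) (hcpos i).le
      have hilek : (k:ℝ) ≤ (i:ℝ) := by exact_mod_cast Nat.right_le_pair n0 k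
      have hzδ : dist z 0 < δ := by
        rw [dist_zero_right]
        have h2 : c i * lam i ≤ 1 / ((i:ℝ) + 1) := hcsmall i
        have h3 : 1 / ((i:ℝ) + 1) ≤ 1 / ((k:ℝ) + 1) := by
          apply one_div_le_one_div_of_le (by positivity)
          linarith
        linarith
      have happ := hδ hzδ
      have hTz : T z = c i • e i := by rw [hzdef, map_smul, hw]
      have hfz : (L μ ∘ T) z = (μ n0 * lam i) * (c i / 8) := by
        show L μ (T z) = _
        rw [hTz, hcenter]
        simp [hidef, Nat.unpair_pair]
      have hf0 : (L μ ∘ T) 0 = 0 := by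
        show L μ (T 0) = 0
        rw [map_zero]
        exact hzero μ
      rw [hfz] at happ
      have happ2 : ‖μ n0 * lam i * (c i / 8) - (L μ ∘ T) 0 - (0 : Y →L[ℝ] ℝ) (z - 0)‖
          ≤ |μ n0| / 16 * ‖z - 0‖ := happ
      rw [hf0, sub_zero, ContinuousLinearMap.zero_apply, sub_zero, sub_zero] at happ2
      have hLHS : ‖μ n0 * lam i * (c i / 8)‖ = |μ n0| * lam i * (c i / 8) := by
        rw [Real.norm_eq_abs, abs_mul, abs_mul, abs_of_pos (hlampos i),
          abs_of_pos (div_pos (hcpos i) (by norm_num))]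
      have hRHS : ‖z‖ ≤ c i * lam i := hzn
      rw [hLHS] at happ2
      have hc1 := hcpos i
      have hl1 := hlampos i
      have hchain : |μ n0| * lam i * (c i / 8) ≤ |μ n0| / 16 * (c i * lam i) := by
        calc |μ n0| * lam i * (c i / 8) ≤ |μ n0| / 16 * ‖z‖ := happ2
          _ ≤ |μ n0| / 16 * (c i * lam i) :=
              mul_le_mul_of_nonneg_left hzn (by positivity)
      nlinarith [mul_pos (mul_pos hmun0 hl1) hc1]
end
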